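/- arXiv:1611.02640 — 11 statements merged into one kernel-verified Lean document; each statement's English description precedes it below -/
import Mathlib

section
/- Let X be a real Banach space, let f : X → ℝ be of class C¹, and let C be a closed convex subset of X. Assume that the derivative f' is of class (S)_+ on C. Then f is sequentially lower semicontinuous on C with respect to the weak topology: for every sequence (u_k) in C converging weakly to a point u ∈ C, one has f(u) ≤ liminf_k f(u_k). -/
open Filter Topology

/-- Let `X` be a real Banach space, `f : X → ℝ` of class `C¹` with
derivative `f'`, and `C` a closed convex subset of `X`.  If `f'` is of class `(S)₊` on `C`,
then `f` is sequentially weakly lower semicontinuous on `C`. -/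
theorem stmt_0
    {X : Type*} [NormedAddCommGroup X] [NormedSpace ℝ X] [CompleteSpace X]
    (f : X → ℝ) (f' : X → (X →L[ℝ] ℝ))
    (hdiff : ∀ x, HasFDerivAt f (f' x) x) (hf'cont : Continuous f')
    (C : Set X) (hCcl : IsClosed C) (hCcv : Convex ℝ C)
    (hSplus : ∀ (v : ℕ → X), (∀ k, v k ∈ C) → ∀ w : X,
        (∀ φ : X →L[ℝ] ℝ, Tendsto (fun k => φ (v k)) atTop (𝓝 (φ w))) →
        limsup (fun k => ((f' (v k)) (v k - w) : EReal)) atTop ≤ 0 →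
        Tendsto (fun k => ‖v k - w‖) atTop (𝓝 0))
    (u : ℕ → X) (hu : ∀ k, u k ∈ C) (u₀ : X) (hu₀ : u₀ ∈ C)
    (hweak : ∀ φ : X →L[ℝ] ℝ, Tendsto (fun k => φ (u k)) atTop (𝓝 (φ u₀))) :
    (f u₀ : EReal) ≤ liminf (fun k => ((f (u k)) : EReal)) atTop := by
  by_contra hcon
  push_neg at hcon
  obtain ⟨r, hr1, hr2⟩ := EReal.exists_between_coe_real hcon
  have hru : r < f u₀ := by exact_mod_cast hr2
  have hfreq : ∃ᶠ k in atTop, (f (u k) : EReal) < (r : EReal) :=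
    frequently_lt_of_liminf_lt (by isBoundedDefault) hr1
  have hfreq' : ∃ᶠ k in atTop, f (u k) < r := by
    apply hfreq.mono
    intro k hk
    exact_mod_cast hk
  obtain ⟨ψ, hψmono, hψ⟩ := extraction_of_frequently_atTop hfreq'
  -- the sequence u is norm bounded
  have hbdd : ∃ M : ℝ, ∀ k, ‖u k - u₀‖ ≤ M := by
    have hpt : ∀ φ : StrongDual ℝ X, ∃ c : ℝ, ∀ k,
        ‖NormedSpace.inclusionInDoubleDual ℝ X (u k) φ‖ ≤ c := by
      intro φ
      have hb : BddAbove (Set.range fun k => ‖φ (u k)‖) :=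
        ((hweak φ).norm).bddAbove_range
      obtain ⟨c, hc⟩ := hb
      exact ⟨c, fun k => hc ⟨k, rfl⟩⟩
    obtain ⟨M, hM⟩ := banach_steinhaus hpt
    refine ⟨M + ‖u₀‖, fun k => ?_⟩
    have h1 : ‖u k‖ ≤ M := by
      have := hM k
      rwa [show ‖NormedSpace.inclusionInDoubleDual ℝ X (u k)‖ = ‖u k‖ from
        (NormedSpace.inclusionInDoubleDualLi ℝ (E := X)).norm_map (u k)] at this
    calc ‖u k - u₀‖ ≤ ‖u k‖ + ‖u₀‖ := norm_sub_le _ _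
      _ ≤ M + ‖u₀‖ := by linarith
  obtain ⟨M, hM⟩ := hbdd
  -- weak convergence of the subsequence
  have hweakψ : ∀ φ : X →L[ℝ] ℝ,
      Tendsto (fun j => φ (u (ψ j))) atTop (𝓝 (φ u₀)) :=
    fun φ => (hweak φ).comp hψmono.tendsto_atTop
  -- mean value theorem
  have hmvt : ∀ j : ℕ, ∃ t ∈ Set.Ioo (0:ℝ) 1,
      f' (u₀ + t • (u (ψ j) - u₀)) (u (ψ j) - u₀) = f (u (ψ j)) - f u₀ := by
    intro j
    set w := u (ψ j) with hw
    have hline : ∀ t : ℝ, HasDerivAt (fun t : ℝ => u₀ + t • (w - u₀)) (w - u₀) t := by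
      intro t
      simpa using ((hasDerivAt_id t).smul_const (w - u₀)).const_add u₀
    have hg : ∀ t : ℝ, HasDerivAt (fun t : ℝ => f (u₀ + t • (w - u₀)))
        (f' (u₀ + t • (w - u₀)) (w - u₀)) t := by
      intro t
      exact (hdiff _).comp_hasDerivAt t (hline t)
    have hcont : ContinuousOn (fun t : ℝ => f (u₀ + t • (w - u₀))) (Set.Icc 0 1) :=
      (continuous_iff_continuousAt.2 fun t => (hg t).continuousAt).continuousOn
    obtain ⟨c, hc, hceq⟩ := exists_hasDerivAt_eq_slope
      (fun t : ℝ => f (u₀ + t • (w - u₀)))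
      (fun t : ℝ => f' (u₀ + t • (w - u₀)) (w - u₀))
      (by norm_num) hcont (fun t _ => hg t)
    refine ⟨c, hc, ?_⟩
    rw [hceq]
    norm_num
  choose t ht heq using hmvt
  set y : ℕ → X := fun j => u₀ + t j • (u (ψ j) - u₀) with hy
  have hyC : ∀ j, y j ∈ C := by
    intro j
    have h01 : (0:ℝ) ≤ t j := le_of_lt (ht j).1
    have h02 : (0:ℝ) ≤ 1 - t j := by have := (ht j).2; linarith
    have := hCcv hu₀ (hu (ψ j)) h02 h01 (by ring)
    have hrw : (1 - t j) • u₀ + t j • u (ψ j) = y j := by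
      simp only [hy, smul_sub, sub_smul, one_smul]
      abel
    rwa [hrw] at this
  -- weak convergence of y to u₀
  have hyweak : ∀ φ : X →L[ℝ] ℝ, Tendsto (fun j => φ (y j)) atTop (𝓝 (φ u₀)) := by
    intro φ
    have h0 : Tendsto (fun j => t j * (φ (u (ψ j)) - φ u₀)) atTop (𝓝 0) := by
      apply squeeze_zero_norm (a := fun j => ‖φ (u (ψ j)) - φ u₀‖)
      · intro j
        rw [norm_mul]
        have h1 : ‖t j‖ ≤ 1 := by
          rw [Real.norm_eq_abs, abs_of_pos (ht j).1]
          exact le_of_lt (ht j).2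
        nlinarith [norm_nonneg (φ (u (ψ j)) - φ u₀)]
      · have := (hweakψ φ).sub_const (φ u₀)
        simpa using this.norm
    have : Tendsto (fun j => φ u₀ + t j * (φ (u (ψ j)) - φ u₀)) atTop (𝓝 (φ u₀ + 0)) :=
      tendsto_const_nhds.add h0
    simp only [add_zero] at this
    convert this using 2 with j
    simp [hy, map_add, map_smul, map_sub, smul_eq_mul]
  -- limsup condition
  have hlimsup : limsup (fun j => ((f' (y j)) (y j - u₀) : EReal)) atTop ≤ 0 := by
    apply limsup_le_of_le (by isBoundedDefault)
    apply Eventually.of_forall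
    intro j
    have hterm : (f' (y j)) (y j - u₀) = t j * (f (u (ψ j)) - f u₀) := by
      have : y j - u₀ = t j • (u (ψ j) - u₀) := by simp [hy]
      rw [this, map_smul, smul_eq_mul, heq j]
    have hneg : (f' (y j)) (y j - u₀) ≤ 0 := by
      rw [hterm]
      have h1 : f (u (ψ j)) - f u₀ ≤ 0 := by have := hψ j; linarith
      have h2 : (0:ℝ) ≤ t j := le_of_lt (ht j).1
      exact mul_nonpos_of_nonneg_of_nonpos h2 h1
    exact_mod_cast hneg
  -- apply the (S)₊ property
  have hnorm := hSplus y hyC u₀ hyweak hlimsup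
  have hy0 : Tendsto y atTop (𝓝 u₀) := by
    rw [tendsto_iff_norm_sub_tendsto_zero]
    exact hnorm
  have hf'y : Tendsto (fun j => f' (y j)) atTop (𝓝 (f' u₀)) :=
    (hf'cont.tendsto u₀).comp hy0
  -- f (u (ψ j)) → f u₀
  have hA : Tendsto (fun j => (f' (y j) - f' u₀) (u (ψ j) - u₀)) atTop (𝓝 0) := by
    apply squeeze_zero_norm (a := fun j => ‖f' (y j) - f' u₀‖ * M)
    · intro j
      calc ‖(f' (y j) - f' u₀) (u (ψ j) - u₀)‖
          ≤ ‖f' (y j) - f' u₀‖ * ‖u (ψ j) - u₀‖ := (f' (y j) - f' u₀).le_opNorm _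
        _ ≤ ‖f' (y j) - f' u₀‖ * M :=
            mul_le_mul_of_nonneg_left (hM (ψ j)) (norm_nonneg _)
    · have h1 : Tendsto (fun j => ‖f' (y j) - f' u₀‖) atTop (𝓝 0) := by
        have := (hf'y.sub_const (f' u₀)).norm
        simpa using this
      have := h1.mul_const M
      simpa using this
  have hB : Tendsto (fun j => (f' u₀) (u (ψ j) - u₀)) atTop (𝓝 0) := by
    have := (hweakψ (f' u₀)).sub_const ((f' u₀) u₀)
    simpa [map_sub] using this
  have hfrep : ∀ j, f (u (ψ j)) =
      f u₀ + ((f' (y j) - f' u₀) (u (ψ j) - u₀) + (f' u₀) (u (ψ j) - u₀)) := by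
    intro j
    have h1 := heq j
    simp only [ContinuousLinearMap.sub_apply]
    linarith
  have hfu : Tendsto (fun j => f (u (ψ j))) atTop (𝓝 (f u₀)) := by
    have h2 : Tendsto (fun j => f u₀ + ((f' (y j) - f' u₀) (u (ψ j) - u₀)
        + (f' u₀) (u (ψ j) - u₀))) atTop (𝓝 (f u₀ + (0 + 0))) :=
      tendsto_const_nhds.add (hA.add hB)
    simp only [add_zero] at h2
    exact h2.congr fun j => (hfrep j).symm
  have hfinal : f u₀ ≤ r :=
    le_of_tendsto hfu (Eventually.of_forall fun j => le_of_lt (hψ j))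
  linarith
end

section
/- Let X be a real Banach space, let f : X → ℝ be of class C¹, and let C be a closed convex subset of X. Assume that the derivative f' is of class (S)_+ on C. If (u_k) is a sequence in C converging weakly to a point u ∈ C and limsup_k f(u_k) ≤ f(u), then ‖u_k − u‖ → 0. -/
open Filter Topology Set

section helpers
variable {X : Type*} [NormedAddCommGroup X] [NormedSpace ℝ X]

lemma mvt_seg (f : X → ℝ) (f' : X → (X →L[ℝ] ℝ)) (hdiff : ∀ x, HasFDerivAt f (f' x) x)
    (a b : X) : ∃ t ∈ Set.Ioo (0:ℝ) 1, f b - f a = f' (a + t • (b - a)) (b - a) := by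
  set g : ℝ → X := fun t => a + t • (b - a) with hg
  have hgd : ∀ t : ℝ, HasDerivAt g (b - a) t := by
    intro t
    have h1 : HasDerivAt (fun t : ℝ => t • (b - a)) ((1:ℝ) • (b - a)) t :=
      (hasDerivAt_id t).smul_const (b - a)
    simpa [hg] using h1.const_add a
  have hcomp : ∀ t : ℝ, HasDerivAt (fun t => f (g t)) (f' (g t) (b - a)) t := by
    intro t
    exact (hdiff (g t)).comp_hasDerivAt t (hgd t)
  obtain ⟨c, hc, hceq⟩ := exists_hasDerivAt_eq_slope (fun t => f (g t))
    (fun t => f' (g t) (b - a)) one_pos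
    (fun t _ => (hcomp t).continuousAt.continuousWithinAt)
    (fun t _ => hcomp t)
  refine ⟨c, hc, ?_⟩
  have h1 : g 1 = b := by simp [hg]
  have h0 : g 0 = a := by simp [hg]
  rw [hceq, h1, h0]; ring

lemma bounded_of_weak (u : ℕ → X) (u₀ : X)
    (hweak : ∀ φ : X →L[ℝ] ℝ, Tendsto (fun k => φ (u k)) atTop (𝓝 (φ u₀))) :
    ∃ M : ℝ, 0 ≤ M ∧ ∀ k, ‖u k - u₀‖ ≤ M := by
  set g : ℕ → (StrongDual ℝ X) →L[ℝ] ℝ :=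
    fun k => NormedSpace.inclusionInDoubleDual ℝ X (u k - u₀) with hgdef
  have hpb : ∀ φ : StrongDual ℝ X, ∃ c, ∀ k, ‖g k φ‖ ≤ c := by
    intro φ
    have h : Tendsto (fun k => φ (u k) - φ u₀) atTop (𝓝 (φ u₀ - φ u₀)) :=
      (hweak φ).sub_const _
    rw [sub_self] at h
    obtain ⟨c, hc⟩ := h.norm.bddAbove_range
    refine ⟨c, fun k => ?_⟩
    have heq : g k φ = φ (u k) - φ u₀ := by
      simp [hgdef, NormedSpace.inclusionInDoubleDual, map_sub]
    rw [heq]; exact hc ⟨k, rfl⟩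
  obtain ⟨M, hM⟩ := banach_steinhaus hpb
  refine ⟨max M 0, le_max_right _ _, fun k => ?_⟩
  have heq : ‖g k‖ = ‖u k - u₀‖ :=
    (NormedSpace.inclusionInDoubleDualLi (𝕜 := ℝ) (E := X)).norm_map (u k - u₀)
  rw [← heq]; exact le_trans (hM k) (le_max_left _ _)

end helpers

/-- Let `X` be a real Banach space, `f : X → ℝ` of class `C¹` with
derivative `f'`, and `C` a closed convex subset of `X` such that `f'` is of class `(S)₊`
on `C`.  If `(u k)` is a sequence in `C` converging weakly to `u₀ ∈ C` with
`limsup f (u k) ≤ f u₀`, then `‖u k - u₀‖ → 0`. -/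
theorem stmt_1
    {X : Type*} [NormedAddCommGroup X] [NormedSpace ℝ X] [CompleteSpace X]
    (f : X → ℝ) (f' : X → (X →L[ℝ] ℝ))
    (hdiff : ∀ x, HasFDerivAt f (f' x) x) (hf'cont : Continuous f')
    (C : Set X) (hCcl : IsClosed C) (hCcv : Convex ℝ C)
    (hSplus : ∀ (v : ℕ → X), (∀ k, v k ∈ C) → ∀ w : X,
        (∀ φ : X →L[ℝ] ℝ, Tendsto (fun k => φ (v k)) atTop (𝓝 (φ w))) →
        limsup (fun k => ((f' (v k)) (v k - w) : EReal)) atTop ≤ 0 →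
        Tendsto (fun k => ‖v k - w‖) atTop (𝓝 0))
    (u : ℕ → X) (hu : ∀ k, u k ∈ C) (u₀ : X) (hu₀ : u₀ ∈ C)
    (hweak : ∀ φ : X →L[ℝ] ℝ, Tendsto (fun k => φ (u k)) atTop (𝓝 (φ u₀)))
    (hlimsup : limsup (fun k => ((f (u k)) : EReal)) atTop ≤ (f u₀ : EReal)) :
    Tendsto (fun k => ‖u k - u₀‖) atTop (𝓝 0) := by
  classical
  obtain ⟨M, hM0, hM⟩ := bounded_of_weak u u₀ hweak
  -- A reusable application of the (S)₊ property to points on segments [u₀, u (ψ k)].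
  have Sapp : ∀ (ψ : ℕ → ℕ), Tendsto ψ atTop atTop → ∀ c : ℕ → ℝ,
      (∀ k, c k ∈ Set.Icc (0:ℝ) 1) →
      limsup (fun k =>
        ((f' (u₀ + c k • (u (ψ k) - u₀)) (c k • (u (ψ k) - u₀)) : ℝ) : EReal)) atTop ≤ 0 →
      Tendsto (fun k => c k * ‖u (ψ k) - u₀‖) atTop (𝓝 0) := by
    intro ψ hψ c hc hls
    set v : ℕ → X := fun k => u₀ + c k • (u (ψ k) - u₀) with hv
    have hvC : ∀ k, v k ∈ C := by
      intro k
      have hmem := hCcv (a := 1 - c k) (b := c k) hu₀ (hu (ψ k))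
        (by linarith [(hc k).2]) (hc k).1 (by ring)
      have : (1 - c k) • u₀ + c k • u (ψ k) = v k := by
        simp only [hv, smul_sub, sub_smul, one_smul]; abel
      rwa [this] at hmem
    have hvweak : ∀ φ : X →L[ℝ] ℝ, Tendsto (fun k => φ (v k)) atTop (𝓝 (φ u₀)) := by
      intro φ
      have h1 : Tendsto (fun k => φ (u (ψ k)) - φ u₀) atTop (𝓝 0) := by
        have := ((hweak φ).comp hψ).sub_const (φ u₀)
        rwa [sub_self] at this
      have h2 : Tendsto (fun k => c k * (φ (u (ψ k)) - φ u₀)) atTop (𝓝 0) := by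
        have hg : Tendsto (fun k => ‖φ (u (ψ k)) - φ u₀‖) atTop (𝓝 0) := by
          simpa using h1.norm
        refine squeeze_zero_norm (fun k => ?_) hg
        rw [norm_mul]
        have h3 : ‖c k‖ ≤ 1 := by
          rw [Real.norm_eq_abs, abs_le]; exact ⟨by linarith [(hc k).1], (hc k).2⟩
        nlinarith [norm_nonneg (φ (u (ψ k)) - φ u₀)]
      have heq : (fun k => φ (v k)) = fun k => φ u₀ + c k * (φ (u (ψ k)) - φ u₀) := by
        funext k; simp [hv, map_add, map_smul, map_sub, smul_eq_mul]
      rw [heq]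
      simpa using tendsto_const_nhds.add h2
    have hS := hSplus v hvC u₀ hvweak (by
      have heq : (fun k => ((f' (v k)) (v k - u₀) : EReal))
          = fun k => ((f' (u₀ + c k • (u (ψ k) - u₀)) (c k • (u (ψ k) - u₀)) : ℝ) : EReal) := by
        funext k; simp [hv]
      rw [heq]; exact hls)
    have heq : (fun k => ‖v k - u₀‖) = fun k => c k * ‖u (ψ k) - u₀‖ := by
      funext k
      simp only [hv, add_sub_cancel_left, norm_smul, Real.norm_eq_abs,
        abs_of_nonneg (hc k).1]
    rwa [heq] at hS
  -- From the limsup hypothesis: eventual upper bounds on f (u k).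
  have hfu : ∀ ε : ℝ, 0 < ε → ∀ᶠ k in atTop, f (u k) < f u₀ + ε := by
    intro ε hε
    have hlt : limsup (fun k => ((f (u k)) : EReal)) atTop < ((f u₀ + ε : ℝ) : EReal) :=
      lt_of_le_of_lt hlimsup (by exact_mod_cast (by linarith : f u₀ < f u₀ + ε))
    exact (eventually_lt_of_limsup_lt hlt).mono fun k hk => by exact_mod_cast hk
  -- The midpoint sequence.
  set v : ℕ → X := fun k => u₀ + (1/2 : ℝ) • (u k - u₀) with hvdef
  -- Lower semicontinuity-type claim on the midpoints.
  have hlsc : ∀ ε : ℝ, 0 < ε → ∀ᶠ k in atTop, f u₀ - ε < f (v k) := by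
    intro ε hε
    by_contra hcon
    rw [Filter.not_eventually] at hcon
    obtain ⟨φ, hφmono, hφ⟩ := extraction_of_frequently_atTop
      (hcon.mono fun k hk => not_lt.1 hk)
    -- hφ : ∀ n, f (v (φ n)) ≤ f u₀ - ε
    choose t ht heq using fun n => mvt_seg f f' hdiff u₀ (v (φ n))
    set c : ℕ → ℝ := fun n => t n / 2 with hcdef
    have hkey : ∀ n, u₀ + t n • (v (φ n) - u₀) = u₀ + c n • (u (φ n) - u₀) := by
      intro n
      simp only [hvdef, hcdef, add_sub_cancel_left, smul_smul]
      congr 2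
      ring
    have hval : ∀ n, f' (u₀ + c n • (u (φ n) - u₀)) (c n • (u (φ n) - u₀))
        = t n * (f (v (φ n)) - f u₀) := by
      intro n
      have h1 : (c n) • (u (φ n) - u₀) = t n • (v (φ n) - u₀) := by
        simp only [hvdef, hcdef, add_sub_cancel_left, smul_smul]
        congr 1
        ring
      rw [← hkey n, h1, map_smul, smul_eq_mul, ← heq n]
    have hSres := Sapp φ hφmono.tendsto_atTop c
      (fun n => ⟨by simp only [hcdef]; linarith [(ht n).1], by
        simp only [hcdef]; linarith [(ht n).2]⟩)
      (by
        apply limsup_le_of_le (by isBoundedDefault)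
        apply Eventually.of_forall
        intro n
        rw [hval n]
        have : t n * (f (v (φ n)) - f u₀) ≤ 0 := by nlinarith [(ht n).1, hφ n]
        exact_mod_cast EReal.coe_nonpos.2 this)
    -- the MVT points converge strongly to u₀
    set y : ℕ → X := fun n => u₀ + c n • (u (φ n) - u₀) with hydef
    have hynorm : Tendsto (fun n => ‖y n - u₀‖) atTop (𝓝 0) := by
      have heq2 : (fun n => ‖y n - u₀‖) = fun n => c n * ‖u (φ n) - u₀‖ := by
        funext n
        have hcn : (0:ℝ) ≤ c n := by simp only [hcdef]; linarith [(ht n).1]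
        simp only [hydef, add_sub_cancel_left, norm_smul, Real.norm_eq_abs,
          abs_of_nonneg hcn]
      rw [heq2]; exact hSres
    have hy : Tendsto y atTop (𝓝 u₀) := tendsto_iff_norm_sub_tendsto_zero.2 hynorm
    have hf'y : Tendsto (fun n => ‖f' (y n) - f' u₀‖) atTop (𝓝 0) := by
      have := (hf'cont.tendsto u₀).comp hy
      exact tendsto_iff_norm_sub_tendsto_zero.1 this
    -- the difference quotient tends to 0
    have hd : Tendsto (fun n => f (v (φ n)) - f u₀) atTop (𝓝 0) := by
      have hrepr : ∀ n, f (v (φ n)) - f u₀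
          = f' u₀ (v (φ n) - u₀) + (f' (y n) - f' u₀) (v (φ n) - u₀) := by
        intro n
        have : f' (y n) (v (φ n) - u₀) = f (v (φ n)) - f u₀ := by
          simp only [hydef]
          rw [← hkey n, ← heq n]
        simp only [ContinuousLinearMap.sub_apply]
        linarith [this]
      have h1 : Tendsto (fun n => f' u₀ (v (φ n) - u₀)) atTop (𝓝 0) := by
        have hw := ((hweak (f' u₀)).comp hφmono.tendsto_atTop).sub_const (f' u₀ u₀)
        rw [sub_self] at hw
        have heq3 : (fun n => f' u₀ (v (φ n) - u₀))
            = fun n => (1/2 : ℝ) * (f' u₀ (u (φ n)) - f' u₀ u₀) := by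
          funext n
          simp [hvdef, map_sub, map_add, map_smul, smul_eq_mul]
        rw [heq3]
        simpa using hw.const_mul (1/2 : ℝ)
      have h2 : Tendsto (fun n => (f' (y n) - f' u₀) (v (φ n) - u₀)) atTop (𝓝 0) := by
        have hg2 : Tendsto (fun n => ‖f' (y n) - f' u₀‖ * M) atTop (𝓝 0) := by
          simpa using hf'y.mul_const M
        refine squeeze_zero_norm (fun n => ?_) hg2
        refine le_trans (ContinuousLinearMap.le_opNorm _ _) ?_
        have hvb : ‖v (φ n) - u₀‖ ≤ M := by
          have h5 : ‖v (φ n) - u₀‖ = (1/2) * ‖u (φ n) - u₀‖ := by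
            simp [hvdef, norm_smul]
          rw [h5]; nlinarith [hM (φ n), norm_nonneg (u (φ n) - u₀)]
        exact mul_le_mul_of_nonneg_left hvb (norm_nonneg _)
      have := h1.add h2
      rw [add_zero] at this
      exact this.congr fun n => (hrepr n).symm
    have := hd.eventually (eventually_gt_nhds (by linarith : -ε < 0))
    obtain ⟨n, hn⟩ := this.exists
    have := hφ n
    linarith
  -- Main argument: MVT between midpoint and endpoint.
  choose τ hτ hτeq using fun k => mvt_seg f f' hdiff (v k) (u k)
  set σ : ℕ → ℝ := fun k => (1 + τ k) / 2 with hσdef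
  have hσmem : ∀ k, σ k ∈ Set.Icc (0:ℝ) 1 := by
    intro k
    constructor <;> simp only [hσdef] <;> [linarith [(hτ k).1]; linarith [(hτ k).2]]
  have hσhalf : ∀ k, 1/2 ≤ σ k := fun k => by
    simp only [hσdef]; linarith [(hτ k).1]
  have hpt : ∀ k, v k + τ k • (u k - v k) = u₀ + σ k • (u k - u₀) := by
    intro k
    simp only [hvdef, hσdef]
    module
  have hval : ∀ k, f' (u₀ + σ k • (u k - u₀)) (σ k • (u k - u₀))
      = 2 * σ k * (f (u k) - f (v k)) := by
    intro k
    have h1 : u k - v k = (1/2 : ℝ) • (u k - u₀) := by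
      simp only [hvdef]; module
    have h2 := hτeq k
    rw [hpt k, h1, map_smul, smul_eq_mul] at h2
    rw [map_smul, smul_eq_mul, h2]
    ring
  have hls : limsup (fun k =>
      ((f' (u₀ + σ k • (u k - u₀)) (σ k • (u k - u₀)) : ℝ) : EReal)) atTop ≤ 0 := by
    set L := limsup (fun k =>
      ((f' (u₀ + σ k • (u k - u₀)) (σ k • (u k - u₀)) : ℝ) : EReal)) atTop with hL
    have hLε : ∀ ε : ℝ, 0 < ε → L ≤ (ε : EReal) := by
      intro ε hε
      apply limsup_le_of_le (by isBoundedDefault)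
      filter_upwards [hfu (ε/4) (by linarith), hlsc (ε/4) (by linarith)] with k h1 h2
      rw [hval k]
      have hx : f (u k) - f (v k) < ε / 2 := by linarith
      have hb : 2 * σ k * (f (u k) - f (v k)) ≤ ε := by
        rcases le_or_gt (f (u k) - f (v k)) 0 with h | h
        · nlinarith [(hσmem k).1]
        · nlinarith [(hσmem k).2, (hσmem k).1]
      exact_mod_cast EReal.coe_le_coe_iff.2 hb
    by_contra hcon
    push_neg at hcon
    obtain ⟨z, hz0, hzL⟩ := EReal.exists_between_coe_real hcon
    have hz0' : (0:ℝ) < z := by exact_mod_cast hz0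
    exact absurd (hLε z hz0') (not_le.2 hzL)
  have hSres := Sapp id tendsto_id σ hσmem hls
  apply squeeze_zero (fun k => norm_nonneg _) (g := fun k => 2 * (σ k * ‖u (id k) - u₀‖))
  · intro k
    have := hσhalf k
    simp only [id_eq]
    nlinarith [norm_nonneg (u k - u₀)]
  · simpa using hSres.const_mul 2
end

section
/- Let X be a reflexive real Banach space (i.e. the canonical inclusion of X into its double dual is surjective), let f : X → ℝ be of class C¹, and let C be a closed convex subset of X. Assume that the derivative f' is of class (S)_+ on C. Then any bounded sequence (u_k) in C with ‖f'(u_k)‖ → 0 admits a subsequence converging in norm. -/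
open Filter Topology NormedSpace TopologicalSpace

/-!
Pass to the closed linear span `Y` of the sequence: it is separable and, as a closed subspace of a
reflexive space, reflexive. Hence `Y''` is separable, so `Y'` is separable too, and sequential
Banach–Alaoglu in `Y''` gives a subsequence converging weakly to some `w`. Along it
`f' (u k) (u k - w) → 0`, because `‖f' (u k)‖ → 0` and `u k - w` stays bounded, so `(S)₊` turns the
weak convergence into norm convergence.
-/

section

variable {X : Type*} [NormedAddCommGroup X] [NormedSpace ℝ X]

theorem Submodule.exists_dual_vanishing_of_notMem {p : Submodule ℝ X} (hp : IsClosed (p : Set X))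
    {x : X} (hx : x ∉ p) : ∃ g : StrongDual ℝ X, g x ≠ 0 ∧ ∀ a ∈ p, g a = 0 := by
  obtain ⟨g, c, hgp, hgx⟩ := geometric_hahn_banach_closed_point p.convex hp hx
  -- `g` is bounded above on the subspace `p`, hence vanishes on it.
  have hker : ∀ a ∈ p, g a = 0 := by
    intro a ha
    by_contra hga
    have := hgp _ (p.smul_mem (c / g a) ha)
    rw [map_smul, smul_eq_mul, div_mul_cancel₀ _ hga] at this
    exact lt_irrefl c this
  have hc : 0 < c := by simpa using hgp 0 p.zero_mem
  exact ⟨g, (hc.trans hgx).ne', hker⟩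

theorem Submodule.isSeparable_topologicalClosure_span {s : Set X} (hs : s.Countable) :
    IsSeparable ((Submodule.span ℝ s).topologicalClosure : Set X) :=
  (hs.isSeparable.span).closure

theorem separableSpace_of_separableSpace_strongDual [SeparableSpace (StrongDual ℝ X)] :
    SeparableSpace X := by
  have : Nonempty (StrongDual ℝ X) := ⟨0⟩
  set e := denseSeq (StrongDual ℝ X)
  have hnorming : ∀ n, ∃ x : X, ‖x‖ ≤ 1 ∧ ‖e n‖ / 2 ≤ ‖e n x‖ := by
    intro n
    rcases eq_or_ne (e n) 0 with h0 | h0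
    · exact ⟨0, by simp [h0]⟩
    · obtain ⟨x, hx, hex⟩ := (e n).exists_lt_apply_of_lt_opNorm
        (half_lt_self (norm_pos_iff.mpr h0))
      exact ⟨x, hx.le, hex.le⟩
  choose x hx1 hxe using hnorming
  set S := (Submodule.span ℝ (Set.range x)).topologicalClosure
  have hxS : ∀ n, x n ∈ S := fun n =>
    Submodule.le_topologicalClosure _ (Submodule.subset_span ⟨n, rfl⟩)
  -- A nonzero `g` annihilating `S` would be far from every `e n`, against density.
  have hS : S = ⊤ := by
    refine Submodule.eq_top_iff'.mpr fun z => by_contra fun hz => ?_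
    obtain ⟨g, hgz, hgS⟩ :=
      Submodule.exists_dual_vanishing_of_notMem (Submodule.isClosed_topologicalClosure _) hz
    have hg : 0 < ‖g‖ := norm_pos_iff.mpr fun h => hgz (by simp [h])
    obtain ⟨n, hn⟩ :=
      (denseRange_denseSeq (StrongDual ℝ X)).exists_dist_lt g (div_pos hg three_pos)
    rw [dist_eq_norm'] at hn
    have hlow : ‖g‖ ≤ ‖e n‖ + ‖e n - g‖ := norm_le_norm_add_norm_sub _ _
    have hup : ‖e n (x n)‖ ≤ ‖e n - g‖ := calc
      ‖e n (x n)‖ = ‖(e n - g) (x n)‖ := by simp [hgS _ (hxS n)]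
      _ ≤ ‖e n - g‖ * ‖x n‖ := (e n - g).le_opNorm _
      _ ≤ ‖e n - g‖ := mul_le_of_le_one_right (norm_nonneg _) (hx1 n)
    linarith [hxe n]
  have := Submodule.isSeparable_topologicalClosure_span (Set.countable_range x)
  rw [← isSeparable_univ_iff]
  simpa [S, hS] using this

theorem Submodule.surjective_inclusionInDoubleDual {p : Submodule ℝ X}
    (hp : IsClosed (p : Set X)) (hX : Function.Surjective (inclusionInDoubleDual ℝ X)) :
    Function.Surjective (inclusionInDoubleDual ℝ p) := by
  intro y
  set restrict : StrongDual ℝ X →L[ℝ] StrongDual ℝ p :=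
    (ContinuousLinearMap.compL ℝ p X ℝ).flip p.subtypeL
  obtain ⟨x, hx⟩ := hX (y.comp restrict)
  have hxy : ∀ φ : StrongDual ℝ X, φ x = y (restrict φ) := fun φ => by
    simpa using DFunLike.congr_fun hx φ
  have hxp : x ∈ p := by
    by_contra hxp
    obtain ⟨g, hgx, hgp⟩ := Submodule.exists_dual_vanishing_of_notMem hp hxp
    have : restrict g = 0 := by ext a; exact hgp a a.2
    exact hgx (by rw [hxy, this, map_zero])
  refine ⟨⟨x, hxp⟩, ContinuousLinearMap.ext fun ψ => ?_⟩
  obtain ⟨φ, hφψ, -⟩ := exists_extension_norm_eq p ψ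
  have : restrict φ = ψ := ContinuousLinearMap.ext hφψ
  rw [dual_def, ← this, ← hxy]
  rfl

theorem exists_subseq_forall_dual_tendsto_of_separableSpace [SeparableSpace X]
    (hX : Function.Surjective (inclusionInDoubleDual ℝ X)) {u : ℕ → X} {M : ℝ}
    (hu : ∀ k, ‖u k‖ ≤ M) :
    ∃ σ : ℕ → ℕ, StrictMono σ ∧ ∃ w : X,
      ∀ φ : StrongDual ℝ X, Tendsto (fun k => φ (u (σ k))) atTop (𝓝 (φ w)) := by
  have : SeparableSpace (StrongDual ℝ (StrongDual ℝ X)) :=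
    hX.denseRange.separableSpace (inclusionInDoubleDual ℝ X).continuous
  have : SeparableSpace (StrongDual ℝ X) := separableSpace_of_separableSpace_strongDual
  -- Sequential Banach–Alaoglu in the bidual, whose elements all come from `X`.
  let U : ℕ → WeakDual ℝ (StrongDual ℝ X) :=
    fun k => WeakDual.toStrongDual.symm (inclusionInDoubleDual ℝ X (u k))
  obtain ⟨Φ, -, σ, hσ, hlim⟩ :=
    WeakDual.isSeqCompact_closedBall ℝ (StrongDual ℝ X) 0 M (x := U) fun k => by
      simpa [U] using (double_dual_bound ℝ X (u k)).trans (hu k)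
  obtain ⟨w, hw⟩ := hX (WeakDual.toStrongDual Φ)
  refine ⟨σ, hσ, w, fun φ => ?_⟩
  have hΦw : Φ φ = φ w := by rw [← dual_def, hw]; rfl
  simpa [U, hΦw, Function.comp_def] using ((WeakDual.eval_continuous φ).tendsto Φ).comp hlim

theorem exists_subseq_forall_dual_tendsto
    (hX : Function.Surjective (inclusionInDoubleDual ℝ X)) {u : ℕ → X} {M : ℝ}
    (hu : ∀ k, ‖u k‖ ≤ M) :
    ∃ σ : ℕ → ℕ, StrictMono σ ∧ ∃ w : X,
      ∀ φ : StrongDual ℝ X, Tendsto (fun k => φ (u (σ k))) atTop (𝓝 (φ w)) := by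
  set Y := (Submodule.span ℝ (Set.range u)).topologicalClosure
  have hY : IsClosed (Y : Set X) := Submodule.isClosed_topologicalClosure _
  have : SeparableSpace Y :=
    (Submodule.isSeparable_topologicalClosure_span (Set.countable_range u)).separableSpace
  let v : ℕ → Y := fun k =>
    ⟨u k, Submodule.le_topologicalClosure _ (Submodule.subset_span ⟨k, rfl⟩)⟩
  obtain ⟨σ, hσ, w, hw⟩ := exists_subseq_forall_dual_tendsto_of_separableSpace
    (Submodule.surjective_inclusionInDoubleDual hY hX) (u := v) hu
  exact ⟨σ, hσ, w, fun φ => hw (φ.comp Y.subtypeL)⟩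

end

theorem stmt_2_general
    {X : Type*} [NormedAddCommGroup X] [NormedSpace ℝ X]
    (hrefl : Function.Surjective (NormedSpace.inclusionInDoubleDual ℝ X))
    (f' : X → (X →L[ℝ] ℝ))
    (C : Set X)
    (hSplus : ∀ (v : ℕ → X), (∀ k, v k ∈ C) → ∀ w : X,
        (∀ φ : X →L[ℝ] ℝ, Tendsto (fun k => φ (v k)) atTop (𝓝 (φ w))) →
        limsup (fun k => ((f' (v k)) (v k - w) : EReal)) atTop ≤ 0 →
        Tendsto (fun k => ‖v k - w‖) atTop (𝓝 0))
    (u : ℕ → X) (hu : ∀ k, u k ∈ C)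
    (hbdd : ∃ M : ℝ, ∀ k, ‖u k‖ ≤ M)
    (hf'0 : Tendsto (fun k => ‖f' (u k)‖) atTop (𝓝 0)) :
    ∃ σ : ℕ → ℕ, StrictMono σ ∧ ∃ w : X, Tendsto (fun k => u (σ k)) atTop (𝓝 w) := by
  obtain ⟨M, hM⟩ := hbdd
  obtain ⟨σ, hσ, w, hweak⟩ := exists_subseq_forall_dual_tendsto hrefl hM
  have hpair : Tendsto (fun k => f' (u (σ k)) (u (σ k) - w)) atTop (𝓝 0) := by
    refine squeeze_zero_norm (fun k => ?_)
      (by simpa using (hf'0.comp hσ.tendsto_atTop).mul_const (M + ‖w‖))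
    calc ‖f' (u (σ k)) (u (σ k) - w)‖ ≤ ‖f' (u (σ k))‖ * ‖u (σ k) - w‖ := (f' _).le_opNorm _
      _ ≤ ‖f' (u (σ k))‖ * (M + ‖w‖) := by
        gcongr
        exact (norm_sub_le _ _).trans (by linarith [hM (σ k)])
  have hlimsup : limsup (fun k => (f' (u (σ k)) (u (σ k) - w) : EReal)) atTop ≤ 0 :=
    (EReal.tendsto_coe.mpr hpair).limsup_eq.le
  exact ⟨σ, hσ, w, tendsto_iff_norm_sub_tendsto_zero.mpr
    (hSplus (u ∘ σ) (fun k => hu (σ k)) w hweak hlimsup)⟩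

/-- Let `X` be a reflexive real Banach space, `f : X → ℝ` of class `C¹`
with derivative `f'`, and `C` a closed convex subset of `X` such that `f'` is of class
`(S)₊` on `C`.  Then any bounded sequence `(u k)` in `C` with `‖f' (u k)‖ → 0` admits a
subsequence converging in norm. -/
theorem stmt_2
    {X : Type*} [NormedAddCommGroup X] [NormedSpace ℝ X] [CompleteSpace X]
    (hrefl : Function.Surjective (NormedSpace.inclusionInDoubleDual ℝ X))
    (f : X → ℝ) (f' : X → (X →L[ℝ] ℝ))
    (hdiff : ∀ x, HasFDerivAt f (f' x) x) (hf'cont : Continuous f')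
    (C : Set X) (hCcl : IsClosed C) (hCcv : Convex ℝ C)
    (hSplus : ∀ (v : ℕ → X), (∀ k, v k ∈ C) → ∀ w : X,
        (∀ φ : X →L[ℝ] ℝ, Tendsto (fun k => φ (v k)) atTop (𝓝 (φ w))) →
        limsup (fun k => ((f' (v k)) (v k - w) : EReal)) atTop ≤ 0 →
        Tendsto (fun k => ‖v k - w‖) atTop (𝓝 0))
    (u : ℕ → X) (hu : ∀ k, u k ∈ C)
    (hbdd : ∃ M : ℝ, ∀ k, ‖u k‖ ≤ M)
    (hf'0 : Tendsto (fun k => ‖f' (u k)‖) atTop (𝓝 0)) :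
    ∃ σ : ℕ → ℕ, StrictMono σ ∧ ∃ w : X, Tendsto (fun k => u (σ k)) atTop (𝓝 w) :=
  stmt_2_general hrefl f' C hSplus u hu hbdd hf'0
end

section
/- Let p > 1 and γ ∈ ℝ, and let Γ : ℝ → ℝ be a function of class C¹ such that Γ(s)/|s|^p → γ as |s| → ∞ and pΓ(s) − sΓ'(s) → +∞ as |s| → ∞. Then Γ(s) − γ|s|^p → +∞ as |s| → ∞. -/
/-!
For `s ≥ s₀` with `p Γ(s) - s Γ'(s) ≥ p C`, the function `(Γ(s) - C) / s^p` has derivative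
`(s Γ'(s) - p (Γ(s) - C)) / s^(p+1) ≤ 0`, so it decreases to its limit `γ`. Hence
`Γ(s) - C ≥ γ s^p` for all large `s`. The case `s → -∞` follows by applying this to `Γ(-s)`.
-/

open Filter Topology Set

theorem antitoneOn_mul_rpow_neg {f : ℝ → ℝ} {a p : ℝ} (ha : 0 < a)
    (hf : ∀ x, a ≤ x → DifferentiableAt ℝ f x)
    (hfp : ∀ x, a ≤ x → x * deriv f x ≤ p * f x) :
    AntitoneOn (fun x => f x * x ^ (-p)) (Ici a) := by
  have hderiv : ∀ x, a ≤ x → HasDerivAt (fun x => f x * x ^ (-p))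
      (deriv f x * x ^ (-p) + f x * (-p * x ^ (-p - 1))) x := fun x hx =>
    (hf x hx).hasDerivAt.mul (Real.hasDerivAt_rpow_const (Or.inl (ha.trans_le hx).ne'))
  apply antitoneOn_of_deriv_nonpos (convex_Ici a)
  · exact fun x hx => (hderiv x hx).continuousAt.continuousWithinAt
  · rw [interior_Ici]
    exact fun x hx => (hderiv x (le_of_lt hx)).differentiableAt.differentiableWithinAt
  · rw [interior_Ici]
    intro x hx
    have hx0 : 0 < x := ha.trans hx
    rw [(hderiv x hx.le).deriv]
    have hsplit : x ^ (-p) = x ^ (-p - 1) * x := by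
      rw [← Real.rpow_add_one hx0.ne']; ring_nf
    calc deriv f x * x ^ (-p) + f x * (-p * x ^ (-p - 1))
        = x ^ (-p - 1) * (x * deriv f x - p * f x) := by rw [hsplit]; ring
      _ ≤ 0 := mul_nonpos_of_nonneg_of_nonpos (Real.rpow_pos_of_pos hx0 _).le
          (sub_nonpos.mpr (hfp x hx.le))

theorem tendsto_sub_mul_abs_rpow_atTop {p γ : ℝ} (hp : 0 < p) {Γ : ℝ → ℝ}
    (hΓ : Differentiable ℝ Γ)
    (h1 : Tendsto (fun s => Γ s / |s| ^ p) atTop (𝓝 γ))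
    (h2 : Tendsto (fun s => p * Γ s - s * deriv Γ s) atTop atTop) :
    Tendsto (fun s => Γ s - γ * |s| ^ p) atTop atTop := by
  rw [tendsto_atTop]
  intro C
  obtain ⟨s₀, hs₀⟩ := eventually_atTop.mp
    ((h2.eventually_ge_atTop (p * C)).and (eventually_gt_atTop 0))
  have hs₀pos : 0 < s₀ := (hs₀ s₀ le_rfl).2
  have hanti : AntitoneOn (fun x => (Γ x - C) * x ^ (-p)) (Ici s₀) := by
    refine antitoneOn_mul_rpow_neg hs₀pos (fun x _ => (hΓ x).sub_const C) fun x hx => ?_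
    rw [deriv_sub_const]
    linarith [(hs₀ x hx).1]
  have hlim : Tendsto (fun x => (Γ x - C) * x ^ (-p)) atTop (𝓝 γ) := by
    have hC : Tendsto (fun x : ℝ => C / x ^ p) atTop (𝓝 0) :=
      tendsto_const_nhds.div_atTop (tendsto_rpow_atTop hp)
    rw [← sub_zero γ]
    refine (h1.sub hC).congr' ?_
    filter_upwards [eventually_gt_atTop 0] with x hx
    rw [abs_of_pos hx, Real.rpow_neg hx.le, ← div_eq_mul_inv, sub_div]
  filter_upwards [eventually_ge_atTop s₀] with s hs
  have hspos : 0 < s := hs₀pos.trans_le hs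
  have hγ : γ ≤ (Γ s - C) * s ^ (-p) :=
    le_of_tendsto hlim (eventually_atTop.mpr ⟨s, fun t ht => hanti hs (hs.trans ht) ht⟩)
  rw [Real.rpow_neg hspos.le, ← div_eq_mul_inv, le_div_iff₀ (Real.rpow_pos_of_pos hspos p)] at hγ
  rw [abs_of_pos hspos]
  linarith

/-- Let `p > 1`, `γ ∈ ℝ` and let `Γ : ℝ → ℝ` be of class `C¹` with
`Γ s / |s| ^ p → γ` as `|s| → ∞` and `p * Γ s - s * Γ' s → +∞` as `|s| → ∞`.
Then `Γ s - γ * |s| ^ p → +∞` as `|s| → ∞`. -/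
theorem stmt_3 (p γ : ℝ) (hp : 1 < p) (Γ : ℝ → ℝ) (hΓ : ContDiff ℝ 1 Γ)
    (h1 : Tendsto (fun s => Γ s / |s| ^ p) atTop (𝓝 γ))
    (h1' : Tendsto (fun s => Γ s / |s| ^ p) atBot (𝓝 γ))
    (h2 : Tendsto (fun s => p * Γ s - s * deriv Γ s) atTop atTop)
    (h2' : Tendsto (fun s => p * Γ s - s * deriv Γ s) atBot atTop) :
    Tendsto (fun s => Γ s - γ * |s| ^ p) atTop atTop ∧
      Tendsto (fun s => Γ s - γ * |s| ^ p) atBot atTop := by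
  have hp₀ : 0 < p := one_pos.trans hp
  have hdiff : Differentiable ℝ Γ := hΓ.differentiable one_ne_zero
  refine ⟨tendsto_sub_mul_abs_rpow_atTop hp₀ hdiff h1 h2, ?_⟩
  have h1_neg : Tendsto (fun s => Γ (-s) / |s| ^ p) atTop (𝓝 γ) := by
    simpa [Function.comp_def, abs_neg] using h1'.comp tendsto_neg_atTop_atBot
  have h2_neg : Tendsto (fun s => p * Γ (-s) - s * deriv (fun x => Γ (-x)) s) atTop atTop := by
    refine (h2'.comp tendsto_neg_atTop_atBot).congr fun s => ?_
    simp only [Function.comp_apply, deriv_comp_neg]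
    ring
  have hneg := tendsto_sub_mul_abs_rpow_atTop hp₀ (hdiff.comp differentiable_neg) h1_neg h2_neg
  simpa [Function.comp_def, abs_neg] using hneg.comp tendsto_neg_atBot_atTop
end

section
/- Let N ≥ 1, p > 1, κ ≥ 0 and ν > 0, and let Ψ : ℝ^N → ℝ be a function such that Ψ − ν Ψ_{p,κ} is convex on ℝ^N. Then Ψ is strictly convex on ℝ^N. -/
/-!
Up to an additive constant, `p Ψ_{p,κ}(ξ)` is `‖(κ, ξ)‖ ^ p`, the `p`-th power of the Euclidean
norm on `ℝ × ℝ^N` composed with the injective affine map `ξ ↦ (κ, ξ)`. For `p > 1` the `p`-th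
power of the norm of a strictly convex space is strictly convex, so `ν Ψ_{p,κ}` is strictly
convex, and `Ψ` is a convex function plus a strictly convex one.
-/

open Filter Topology

/-- The function `Ψ_{p,κ}(ξ) = (1/p) * ((κ² + |ξ|²)^(p/2) - κ^p)`. -/
noncomputable def PsiPK (N : ℕ) (p κ : ℝ) (ξ : EuclideanSpace ℝ (Fin N)) : ℝ :=
  (1 / p) * ((κ ^ 2 + ‖ξ‖ ^ 2) ^ (p / 2) - κ ^ p)

open Set

theorem StrictConvexOn.comp_affineMap {𝕜 E F β : Type*} [Field 𝕜] [LinearOrder 𝕜]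
    [AddCommGroup E] [AddCommGroup F] [Module 𝕜 E] [Module 𝕜 F]
    [AddCommMonoid β] [PartialOrder β] [SMul 𝕜 β] {f : F → β} {s : Set F}
    (g : E →ᵃ[𝕜] F) (hg : Function.Injective g) (hf : StrictConvexOn 𝕜 s f) :
    StrictConvexOn 𝕜 (g ⁻¹' s) (f ∘ g) :=
  ⟨hf.1.affine_preimage _, fun x hx y hy hxy a b ha hb hab =>
    calc
      (f ∘ g) (a • x + b • y) = f (a • g x + b • g y) := by
        rw [Function.comp_apply, Convex.combo_affine_apply hab]
      _ < a • f (g x) + b • f (g y) := hf.2 hx hy (hg.ne hxy) ha hb hab⟩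

theorem StrictConvexOn.const_mul {E : Type*} [AddCommMonoid E] [Module ℝ E] {s : Set E}
    {f : E → ℝ} {c : ℝ} (hc : 0 < c) (hf : StrictConvexOn ℝ s f) :
    StrictConvexOn ℝ s fun x => c * f x :=
  ⟨hf.1, fun x hx y hy hxy a b ha hb hab =>
    calc
      c * f (a • x + b • y) < c * (a • f x + b • f y) :=
        mul_lt_mul_of_pos_left (hf.2 hx hy hxy ha hb hab) hc
      _ = a • (c * f x) + b • (c * f y) := by simp only [smul_eq_mul]; ring⟩

theorem strictConvexOn_norm_rpow {E : Type*} [NormedAddCommGroup E] [NormedSpace ℝ E]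
    [StrictConvexSpace ℝ E] {p : ℝ} (hp : 1 < p) :
    StrictConvexOn ℝ univ fun x : E => ‖x‖ ^ p := by
  refine ⟨convex_univ, fun x _ y _ hxy a b ha hb hab => ?_⟩
  simp only [smul_eq_mul]
  rcases eq_or_ne ‖x‖ ‖y‖ with hnorm | hnorm
  · -- On a sphere, strict convexity of the space already makes the norm drop strictly.
    calc ‖a • x + b • y‖ ^ p < ‖x‖ ^ p :=
          Real.rpow_lt_rpow (norm_nonneg _)
            (norm_combo_lt_of_ne le_rfl hnorm.ge hxy ha hb hab) (by linarith)
      _ = a * ‖x‖ ^ p + b * ‖y‖ ^ p := by rw [← hnorm, ← add_mul, hab, one_mul]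
  · calc ‖a • x + b • y‖ ^ p ≤ (a * ‖x‖ + b * ‖y‖) ^ p := by
          refine Real.rpow_le_rpow (norm_nonneg _) ?_ (by linarith)
          simpa [norm_smul, abs_of_pos ha, abs_of_pos hb] using norm_add_le (a • x) (b • y)
      _ < a * ‖x‖ ^ p + b * ‖y‖ ^ p :=
          (strictConvexOn_rpow hp).2 (norm_nonneg x) (norm_nonneg y) hnorm ha hb hab

theorem strictConvexOn_rpow_sq_add_norm_sq {E : Type*} [NormedAddCommGroup E]
    [InnerProductSpace ℝ E] {p : ℝ} (hp : 1 < p) (κ : ℝ) :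
    StrictConvexOn ℝ univ fun ξ : E => (κ ^ 2 + ‖ξ‖ ^ 2) ^ (p / 2) := by
  let g : E →ᵃ[ℝ] WithLp 2 (ℝ × E) :=
    ((WithLp.linearEquiv 2 ℝ (ℝ × E)).symm.toLinearMap ∘ₗ LinearMap.inr ℝ ℝ E).toAffineMap +
      AffineMap.const ℝ E (WithLp.toLp 2 (κ, 0))
  have hg : ∀ ξ, g ξ = WithLp.toLp 2 (κ, ξ) := fun ξ => by
    simp [g, ← WithLp.toLp_add]
  have hg_inj : Function.Injective g := fun ξ η h => by
    simpa [hg] using h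
  have hnorm : ∀ ξ, (κ ^ 2 + ‖ξ‖ ^ 2) ^ (p / 2) = ‖g ξ‖ ^ p := fun ξ => by
    have hsq : ‖g ξ‖ ^ 2 = κ ^ 2 + ‖ξ‖ ^ 2 := by
      simp [WithLp.prod_norm_sq_eq_of_L2, hg]
    rw [← hsq, ← Real.rpow_natCast, ← Real.rpow_mul (norm_nonneg _), Nat.cast_ofNat,
      mul_div_cancel₀ p two_ne_zero]
  simp only [hnorm]
  exact (strictConvexOn_norm_rpow hp).comp_affineMap g hg_inj

theorem strictConvexOn_psiPK (N : ℕ) {p : ℝ} (hp : 1 < p) (κ : ℝ) :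
    StrictConvexOn ℝ univ (PsiPK N p κ) := by
  have h := ((strictConvexOn_rpow_sq_add_norm_sq (E := EuclideanSpace ℝ (Fin N)) hp κ).add_const
    (-κ ^ p)).const_mul (one_div_pos.2 (zero_lt_one.trans hp))
  simp only [Pi.add_def, ← sub_eq_add_neg] at h
  exact h

theorem stmt_4_general (N : ℕ) (p κ ν : ℝ) (hp : 1 < p) (hν : 0 < ν)
    (Ψ : EuclideanSpace ℝ (Fin N) → ℝ)
    (hconv : ConvexOn ℝ Set.univ (fun ξ => Ψ ξ - ν * PsiPK N p κ ξ)) :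
    StrictConvexOn ℝ Set.univ Ψ := by
  simpa only [Pi.add_def, sub_add_cancel] using
    hconv.add_strictConvexOn ((strictConvexOn_psiPK N hp κ).const_mul hν)

/-- If `Ψ - ν Ψ_{p,κ}` is convex with `ν > 0`, then `Ψ` is strictly
convex. -/
theorem stmt_4 (N : ℕ) (hN : 1 ≤ N) (p κ ν : ℝ) (hp : 1 < p) (hκ : 0 ≤ κ) (hν : 0 < ν)
    (Ψ : EuclideanSpace ℝ (Fin N) → ℝ)
    (hconv : ConvexOn ℝ Set.univ (fun ξ => Ψ ξ - ν * PsiPK N p κ ξ)) :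
    StrictConvexOn ℝ Set.univ Ψ :=
  stmt_4_general N p κ ν hp hν Ψ hconv
end

section
/- Let N ≥ 1, p > 1, κ > 0 and 0 < ν ≤ C, and let Ψ : ℝ^N → ℝ be of class C² satisfying the sandwich condition for Ψ_{p,κ} with constants ν, C. Then for every η, ξ ∈ ℝ^N: ν · min{p−1, 1} · (κ² + |η|²)^{(p−2)/2} |ξ|² ≤ Ψ''(η)[ξ]² ≤ C · max{p−1, 1} · (κ² + |η|²)^{(p−2)/2} |ξ|², where Ψ''(η)[ξ]² denotes the second derivative of Ψ at η evaluated as a quadratic form at ξ. -/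
open Filter Topology

/-- `Ψ` satisfies the sandwich condition for `Ψ_{p,κ}` with constants `ν ≤ C`:
both `Ψ - ν Ψ_{p,κ}` and `C Ψ_{p,κ} - Ψ` are convex. -/
def SandwichCond (N : ℕ) (p κ ν C : ℝ) (Ψ : EuclideanSpace ℝ (Fin N) → ℝ) : Prop :=
  ConvexOn ℝ Set.univ (fun ξ => Ψ ξ - ν * PsiPK N p κ ξ) ∧
    ConvexOn ℝ Set.univ (fun ξ => C * PsiPK N p κ ξ - Ψ ξ)

/-!
Along the line `t ↦ η + t • ξ`, convexity of `Ψ - ν Ψ_{p,κ}` and `C Ψ_{p,κ} - Ψ` makes their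
second derivatives nonnegative, so `Ψ''(η)[ξ]²` lies between `ν` and `C` times
`Ψ_{p,κ}''(η)[ξ]² = Q^((p-2)/2 - 1) ((p - 2) ⟪η, ξ⟫² + Q |ξ|²)`, where `Q = κ² + |η|²`.
By Cauchy–Schwarz `0 ≤ ⟪η, ξ⟫² ≤ Q |ξ|²`, which pins the bracket between `min (p-1) 1 · Q |ξ|²`
and `max (p-1) 1 · Q |ξ|²`.
-/

open RealInnerProductSpace

section SecondDerivative

variable {E F : Type*} [NormedAddCommGroup E] [NormedSpace ℝ E]
  [NormedAddCommGroup F] [NormedSpace ℝ F]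

theorem HasFDerivAt.hasDerivAt_add_smul {g : E → F} {g' : E →L[ℝ] F} {η ξ : E} {t : ℝ}
    (hg : HasFDerivAt g g' (η + t • ξ)) :
    HasDerivAt (fun s : ℝ => g (η + s • ξ)) (g' ξ) t := by
  have hline : HasDerivAt (fun s : ℝ => η + s • ξ) ξ t := by
    simpa using ((hasDerivAt_id t).smul_const ξ).const_add η
  exact hg.comp_hasDerivAt t hline

theorem hasDerivAt_fderiv_add_smul_apply {f : E → F} {η : E}
    (hf : DifferentiableAt ℝ (fderiv ℝ f) η) (ξ : E) :
    HasDerivAt (fun s : ℝ => fderiv ℝ f (η + s • ξ) ξ) (fderiv ℝ (fderiv ℝ f) η ξ ξ) 0 := by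
  have hline : HasDerivAt (fun s : ℝ => fderiv ℝ f (η + s • ξ)) (fderiv ℝ (fderiv ℝ f) η ξ) 0 :=
    HasFDerivAt.hasDerivAt_add_smul (by simpa using hf.hasFDerivAt)
  simpa using hline.clm_apply (hasDerivAt_const 0 ξ)

theorem ConvexOn.nonneg_of_hasDerivAt_of_hasDerivAt {φ φ' : ℝ → ℝ} {c t : ℝ}
    (hφ : ConvexOn ℝ Set.univ φ) (hφ' : ∀ s, HasDerivAt φ (φ' s) s)
    (hφ'' : HasDerivAt φ' c t) : 0 ≤ c := by
  have hderiv : deriv φ = φ' := funext fun s => (hφ' s).deriv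
  have hmono : Monotone φ' := by
    rw [← monotoneOn_univ, ← hderiv]
    exact hφ.monotoneOn_deriv fun s _ => (hφ' s).differentiableAt
  exact hφ''.nonneg_of_monotone hmono

theorem ConvexOn.fderiv_fderiv_apply_self_nonneg {f : E → ℝ} (hconv : ConvexOn ℝ Set.univ f)
    (hf : ContDiff ℝ 2 f) (η ξ : E) : 0 ≤ fderiv ℝ (fderiv ℝ f) η ξ ξ := by
  have hdiff : Differentiable ℝ f := hf.differentiable (by norm_num)
  have hline : ConvexOn ℝ Set.univ (fun s : ℝ => f (η + s • ξ)) := by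
    simpa [Function.comp_def, AffineMap.lineMap_apply, add_comm] using
      hconv.comp_affineMap (AffineMap.lineMap η (η + ξ) : ℝ →ᵃ[ℝ] E)
  refine hline.nonneg_of_hasDerivAt_of_hasDerivAt (t := 0)
    (fun s => (hdiff _).hasFDerivAt.hasDerivAt_add_smul) ?_
  exact hasDerivAt_fderiv_add_smul_apply
    ((hf.fderiv_right (m := 1) (by norm_num)).differentiable (by norm_num) η) ξ

theorem fderiv_fderiv_apply_self_eq_iteratedFDeriv (f : E → F) (η ξ : E) :
    fderiv ℝ (fderiv ℝ f) η ξ ξ = iteratedFDeriv ℝ 2 f η ![ξ, ξ] :=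
  (iteratedFDeriv_two_apply f η ![ξ, ξ]).symm

theorem fderiv_fderiv_apply_le_of_convexOn_sub {f g : E → ℝ} (hf : ContDiff ℝ 2 f)
    (hg : ContDiff ℝ 2 g) (hconv : ConvexOn ℝ Set.univ (fun x => f x - g x)) (η ξ : E) :
    fderiv ℝ (fderiv ℝ g) η ξ ξ ≤ fderiv ℝ (fderiv ℝ f) η ξ ξ := by
  have h := hconv.fderiv_fderiv_apply_self_nonneg (hf.sub hg) η ξ
  simp only [fderiv_fderiv_apply_self_eq_iteratedFDeriv] at h ⊢
  rw [show (fun x => f x - g x) = f - g from rfl,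
    iteratedFDeriv_sub_apply hf.contDiffAt hg.contDiffAt] at h
  simpa using h

theorem fderiv_fderiv_const_mul_apply {f : E → ℝ} (hf : ContDiff ℝ 2 f) (c : ℝ) (η ξ : E) :
    fderiv ℝ (fderiv ℝ (fun x => c * f x)) η ξ ξ = c * fderiv ℝ (fderiv ℝ f) η ξ ξ := by
  simp only [fderiv_fderiv_apply_self_eq_iteratedFDeriv, ← smul_eq_mul (a := c)]
  rw [iteratedFDeriv_const_smul_apply' hf.contDiffAt]
  rfl

end SecondDerivative

theorem sub_two_mul_add_mem_Icc {p x y : ℝ} (hx : 0 ≤ x) (hxy : x ≤ y) :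
    (p - 2) * x + y ∈ Set.Icc (min (p - 1) 1 * y) (max (p - 1) 1 * y) := by
  rcases le_total p 2 with hp | hp
  · rw [min_eq_left (by linarith), max_eq_right (by linarith)]
    constructor <;> nlinarith
  · rw [min_eq_right (by linarith), max_eq_left (by linarith)]
    constructor <;> nlinarith

section PsiPK

variable {N : ℕ} {p κ : ℝ}

theorem contDiff_psiPK (hκ : κ ≠ 0) {n : WithTop ℕ∞} : ContDiff ℝ n (PsiPK N p κ) := by
  unfold PsiPK
  refine contDiff_const.mul (ContDiff.sub ?_ contDiff_const)
  exact (contDiff_const.add (contDiff_norm_sq ℝ)).rpow_const_of_ne fun x => by positivity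

theorem hasFDerivAt_psiPK (hp : p ≠ 0) (hκ : κ ≠ 0) (x : EuclideanSpace ℝ (Fin N)) :
    HasFDerivAt (PsiPK N p κ) ((κ ^ 2 + ‖x‖ ^ 2) ^ ((p - 2) / 2) • innerSL ℝ x) x := by
  have hQ : κ ^ 2 + ‖x‖ ^ 2 ≠ 0 := by positivity
  have h := ((((hasStrictFDerivAt_norm_sq x).hasFDerivAt.const_add (κ ^ 2)).rpow_const
    (p := p / 2) (Or.inl hQ)).sub_const (κ ^ p)).const_mul (1 / p)
  refine h.congr_fderiv ?_
  ext v
  simp only [smul_apply, smul_eq_mul, nsmul_eq_mul, innerSL_apply_apply]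
  rw [show p / 2 - 1 = (p - 2) / 2 by ring]
  field_simp
  ring

theorem fderiv_fderiv_psiPK_apply (hp : p ≠ 0) (hκ : κ ≠ 0) (η ξ : EuclideanSpace ℝ (Fin N)) :
    fderiv ℝ (fderiv ℝ (PsiPK N p κ)) η ξ ξ =
      (κ ^ 2 + ‖η‖ ^ 2) ^ ((p - 2) / 2 - 1) *
        ((p - 2) * ⟪η, ξ⟫ ^ 2 + (κ ^ 2 + ‖η‖ ^ 2) * ‖ξ‖ ^ 2) := by
  have hline : HasDerivAt (fun s : ℝ => η + s • ξ) ξ 0 := by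
    simpa using ((hasDerivAt_id (0 : ℝ)).smul_const ξ).const_add η
  have hQ : κ ^ 2 + ‖η‖ ^ 2 ≠ 0 := by positivity
  have hgrad : HasDerivAt (fun s : ℝ => fderiv ℝ (PsiPK N p κ) (η + s • ξ) ξ)
      ((2 * ⟪η, ξ⟫) * ((p - 2) / 2) * (κ ^ 2 + ‖η‖ ^ 2) ^ ((p - 2) / 2 - 1) * ⟪η, ξ⟫ +
        (κ ^ 2 + ‖η‖ ^ 2) ^ ((p - 2) / 2) * ⟪ξ, ξ⟫) 0 := by
    simp only [(hasFDerivAt_psiPK hp hκ _).fderiv, smul_apply,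
      innerSL_apply_apply, smul_eq_mul]
    have hnorm := (hline.norm_sq.const_add (κ ^ 2)).rpow_const (p := (p - 2) / 2)
      (Or.inl (by simpa using hQ))
    simpa using hnorm.fun_mul (hline.inner ℝ (hasDerivAt_const 0 ξ))
  rw [(hasDerivAt_fderiv_add_smul_apply ((contDiff_psiPK hκ (n := 2)).fderiv_right
    (m := 1) (by norm_num) |>.differentiable (by norm_num) η) ξ).unique hgrad,
    real_inner_self_eq_norm_sq, Real.rpow_sub_one hQ]
  field_simp

theorem fderiv_fderiv_psiPK_apply_mem_Icc (hp : p ≠ 0) (hκ : κ ≠ 0)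
    (η ξ : EuclideanSpace ℝ (Fin N)) :
    fderiv ℝ (fderiv ℝ (PsiPK N p κ)) η ξ ξ ∈
      Set.Icc (min (p - 1) 1 * (κ ^ 2 + ‖η‖ ^ 2) ^ ((p - 2) / 2) * ‖ξ‖ ^ 2)
        (max (p - 1) 1 * (κ ^ 2 + ‖η‖ ^ 2) ^ ((p - 2) / 2) * ‖ξ‖ ^ 2) := by
  have hQ : 0 < κ ^ 2 + ‖η‖ ^ 2 := by positivity
  have hcs : ⟪η, ξ⟫ ^ 2 ≤ (κ ^ 2 + ‖η‖ ^ 2) * ‖ξ‖ ^ 2 := by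
    have := real_inner_mul_inner_self_le η ξ
    rw [real_inner_self_eq_norm_sq, real_inner_self_eq_norm_sq] at this
    nlinarith [sq_nonneg κ, sq_nonneg ‖ξ‖]
  obtain ⟨hlo, hhi⟩ := sub_two_mul_add_mem_Icc (p := p) (sq_nonneg _) hcs
  have hpow : (κ ^ 2 + ‖η‖ ^ 2) ^ ((p - 2) / 2) =
      (κ ^ 2 + ‖η‖ ^ 2) ^ ((p - 2) / 2 - 1) * (κ ^ 2 + ‖η‖ ^ 2) := by
    rw [Real.rpow_sub_one hQ.ne', div_mul_cancel₀ _ hQ.ne']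
  have hpos : 0 < (κ ^ 2 + ‖η‖ ^ 2) ^ ((p - 2) / 2 - 1) := Real.rpow_pos_of_pos hQ _
  rw [fderiv_fderiv_psiPK_apply hp hκ, hpow]
  constructor
  · nlinarith [mul_le_mul_of_nonneg_left hlo hpos.le]
  · nlinarith [mul_le_mul_of_nonneg_left hhi hpos.le]

end PsiPK

theorem stmt_6_general (N : ℕ) (p κ ν C : ℝ) (hp : 1 < p) (hκ : 0 < κ)
    (hν : 0 < ν) (hνC : ν ≤ C)
    (Ψ : EuclideanSpace ℝ (Fin N) → ℝ) (hΨ : ContDiff ℝ 2 Ψ)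
    (hsand : SandwichCond N p κ ν C Ψ) :
    ∀ η ξ : EuclideanSpace ℝ (Fin N),
      ν * min (p - 1) 1 * (κ ^ 2 + ‖η‖ ^ 2) ^ ((p - 2) / 2) * ‖ξ‖ ^ 2 ≤
          (fderiv ℝ (fderiv ℝ Ψ) η ξ) ξ ∧
      (fderiv ℝ (fderiv ℝ Ψ) η ξ) ξ ≤
          C * max (p - 1) 1 * (κ ^ 2 + ‖η‖ ^ 2) ^ ((p - 2) / 2) * ‖ξ‖ ^ 2 := by
  intro η ξ
  have hP : ContDiff ℝ 2 (PsiPK N p κ) := contDiff_psiPK hκ.ne'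
  obtain ⟨hPlo, hPhi⟩ := fderiv_fderiv_psiPK_apply_mem_Icc (zero_lt_one.trans hp).ne' hκ.ne' η ξ
  have hlo := fderiv_fderiv_apply_le_of_convexOn_sub hΨ (contDiff_const.mul hP) hsand.1 η ξ
  have hhi := fderiv_fderiv_apply_le_of_convexOn_sub (contDiff_const.mul hP) hΨ hsand.2 η ξ
  rw [fderiv_fderiv_const_mul_apply hP] at hlo hhi
  constructor
  · calc _ = ν * (min (p - 1) 1 * (κ ^ 2 + ‖η‖ ^ 2) ^ ((p - 2) / 2) * ‖ξ‖ ^ 2) := by ring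
      _ ≤ ν * fderiv ℝ (fderiv ℝ (PsiPK N p κ)) η ξ ξ := by gcongr
      _ ≤ _ := hlo
  · calc _ ≤ C * fderiv ℝ (fderiv ℝ (PsiPK N p κ)) η ξ ξ := hhi
      _ ≤ C * (max (p - 1) 1 * (κ ^ 2 + ‖η‖ ^ 2) ^ ((p - 2) / 2) * ‖ξ‖ ^ 2) := by
        gcongr; linarith
      _ = _ := by ring

/-- If `κ > 0` and `Ψ` is `C²` satisfying the sandwich condition for
`Ψ_{p,κ}` with constants `ν ≤ C`, then the second derivative of `Ψ` as a quadratic form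
is pinched between `ν min(p-1,1) (κ²+|η|²)^((p-2)/2) |ξ|²` and
`C max(p-1,1) (κ²+|η|²)^((p-2)/2) |ξ|²`. -/
theorem stmt_6 (N : ℕ) (hN : 1 ≤ N) (p κ ν C : ℝ) (hp : 1 < p) (hκ : 0 < κ)
    (hν : 0 < ν) (hνC : ν ≤ C)
    (Ψ : EuclideanSpace ℝ (Fin N) → ℝ) (hΨ : ContDiff ℝ 2 Ψ)
    (hsand : SandwichCond N p κ ν C Ψ) :
    ∀ η ξ : EuclideanSpace ℝ (Fin N),
      ν * min (p - 1) 1 * (κ ^ 2 + ‖η‖ ^ 2) ^ ((p - 2) / 2) * ‖ξ‖ ^ 2 ≤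
          (fderiv ℝ (fderiv ℝ Ψ) η ξ) ξ ∧
      (fderiv ℝ (fderiv ℝ Ψ) η ξ) ξ ≤
          C * max (p - 1) 1 * (κ ^ 2 + ‖η‖ ^ 2) ^ ((p - 2) / 2) * ‖ξ‖ ^ 2 :=
  stmt_6_general N p κ ν C hp hκ hν hνC Ψ hΨ hsand
end

section
/- Let N ≥ 1, 1 < p < 2 and 0 < ν ≤ C, and let Ψ : ℝ^N → ℝ be of class C¹ on ℝ^N, of class C² on ℝ^N \ {0}, and satisfying the sandwich condition for Ψ_{p,0} with constants ν, C. Then for every η, ξ ∈ ℝ^N with η ≠ 0: ((p−1)ν / |η|^{2−p}) |ξ|² ≤ Ψ''(η)[ξ]² ≤ (C / |η|^{2−p}) |ξ|², where Ψ''(η)[ξ]² denotes the second derivative of Ψ at η evaluated as a quadratic form at ξ. -/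
/-!
Write `Φ = Ψ_{p,0}`, i.e. `Φ(x) = |x|^p / p`. A convex function that is `C²` near a point has a
positive semidefinite Hessian there, because its restriction to a line has a monotone derivative.
Applied to `Ψ - νΦ` and `CΦ - Ψ` at `η ≠ 0` this gives `ν Φ''(η) ≤ Ψ''(η) ≤ C Φ''(η)` as quadratic
forms. Explicitly `Φ''(η)[ξ]² = (p - 2) |η|^(p-4) ⟨η, ξ⟩² + |η|^(p-2) |ξ|²`, which for `p ≤ 2` lies
between `(p - 1) |η|^(p-2) |ξ|²` and `|η|^(p-2) |ξ|²` by Cauchy–Schwarz.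
-/

open Filter Topology

lemma ConvexOn.nonneg_of_hasDerivAt_deriv {g : ℝ → ℝ} {s : Set ℝ} {x a : ℝ}
    (hg : ConvexOn ℝ s g) (hs : s ∈ 𝓝 x) (hd : ∀ᶠ t in 𝓝 x, DifferentiableAt ℝ g t)
    (ha : HasDerivAt (deriv g) a x) : 0 ≤ a := by
  obtain ⟨ε, hε, hball⟩ := Metric.eventually_nhds_iff_ball.mp (hd.and hs)
  have hmono : MonotoneOn (deriv g) (Metric.ball x ε) :=
    (hg.subset (fun t ht => (hball t ht).2) (convex_ball x ε)).monotoneOn_deriv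
      fun t ht => (hball t ht).1
  have hacc : AccPt x (𝓟 (Metric.ball x ε)) := by
    simpa using (PerfectSpace.univ_preperfect x (Set.mem_univ x)).nhds_inter
      (Metric.ball_mem_nhds x hε)
  exact ha.hasDerivWithinAt.nonneg_of_monotoneOn hacc hmono

section SecondDerivative

variable {E : Type*} [NormedAddCommGroup E] [NormedSpace ℝ E]

lemma hasDerivAt_fderiv_apply_add_smul {f : E → ℝ} {x : E} (hf : ContDiffAt ℝ 2 f x) (v : E) :
    HasDerivAt (fun t : ℝ => fderiv ℝ f (x + t • v) v) (iteratedFDeriv ℝ 2 f x ![v, v]) 0 := by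
  have hline : HasDerivAt (fun t : ℝ => x + t • v) v 0 := by
    simpa using ((hasDerivAt_id (0 : ℝ)).smul_const v).const_add x
  have hf' : HasFDerivAt (fderiv ℝ f) (fderiv ℝ (fderiv ℝ f) x) (x + (0 : ℝ) • v) := by
    rw [zero_smul, add_zero]
    have h1 : ContDiffAt ℝ 1 (fderiv ℝ f) x := hf.fderiv_right (by norm_num)
    exact (h1.differentiableAt one_ne_zero).hasFDerivAt
  have hcomp : HasDerivAt (fun t : ℝ => fderiv ℝ f (x + t • v)) (fderiv ℝ (fderiv ℝ f) x v) 0 :=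
    hf'.comp_hasDerivAt 0 hline
  rw [iteratedFDeriv_two_apply]
  simpa using hcomp.clm_apply (hasDerivAt_const (0 : ℝ) v)

lemma ConvexOn.iteratedFDeriv_two_nonneg {f : E → ℝ} {s : Set E} {x : E}
    (hf : ConvexOn ℝ s f) (hs : s ∈ 𝓝 x) (hf2 : ContDiffAt ℝ 2 f x) (v : E) :
    0 ≤ iteratedFDeriv ℝ 2 f x ![v, v] := by
  set line : ℝ →ᵃ[ℝ] E := AffineMap.lineMap x (x + v)
  have hline : ∀ t : ℝ, line t = x + t • v := fun t => by
    simp [line, AffineMap.lineMap_apply, add_comm]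
  have hline' : ∀ t : ℝ, HasDerivAt line v t := fun t => by
    simpa [line] using AffineMap.hasDerivAt_lineMap (a := x) (b := x + v) (x := t)
  have hcont : Tendsto line (𝓝 0) (𝓝 x) := by
    simpa [hline] using (hline' 0).continuousAt.tendsto
  have hderiv : ∀ᶠ t in 𝓝 (0 : ℝ), HasDerivAt (f ∘ line) (fderiv ℝ f (x + t • v) v) t := by
    filter_upwards [hcont.eventually (hf2.eventually (by simp))] with t ht
    rw [← hline]
    exact (ht.differentiableAt two_ne_zero).hasFDerivAt.comp_hasDerivAt t (hline' t)
  refine (hf.comp_affineMap line).nonneg_of_hasDerivAt_deriv (hcont hs)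
    (hderiv.mono fun t ht => ht.differentiableAt) ?_
  exact (hasDerivAt_fderiv_apply_add_smul hf2 v).congr_of_eventuallyEq
    (hderiv.mono fun t ht => ht.deriv)

lemma ConvexOn.iteratedFDeriv_two_le_of_sub {f g : E → ℝ} {s : Set E} {x : E}
    (hfg : ConvexOn ℝ s (fun y => f y - g y)) (hs : s ∈ 𝓝 x) (hf : ContDiffAt ℝ 2 f x)
    (hg : ContDiffAt ℝ 2 g x) (v : E) :
    iteratedFDeriv ℝ 2 g x ![v, v] ≤ iteratedFDeriv ℝ 2 f x ![v, v] := by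
  have := hfg.iteratedFDeriv_two_nonneg hs (hf.sub hg) v
  change 0 ≤ iteratedFDeriv ℝ 2 (f - g) x ![v, v] at this
  rwa [iteratedFDeriv_sub_apply hf hg, sub_apply, sub_nonneg] at this

lemma iteratedFDeriv_two_mem_Icc_of_convexOn_sub {f g : E → ℝ} {x : E} {ν C : ℝ}
    (hlower : ConvexOn ℝ Set.univ (fun y => f y - ν * g y))
    (hupper : ConvexOn ℝ Set.univ (fun y => C * g y - f y))
    (hf : ContDiffAt ℝ 2 f x) (hg : ContDiffAt ℝ 2 g x) (v : E) :
    iteratedFDeriv ℝ 2 f x ![v, v]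
      ∈ Set.Icc (ν * iteratedFDeriv ℝ 2 g x ![v, v]) (C * iteratedFDeriv ℝ 2 g x ![v, v]) := by
  have hsmul (c : ℝ) : iteratedFDeriv ℝ 2 (fun y => c * g y) x ![v, v]
      = c * iteratedFDeriv ℝ 2 g x ![v, v] := by
    simpa using congr($(iteratedFDeriv_const_smul_apply' (a := c) hg) ![v, v])
  rw [Set.mem_Icc, ← hsmul, ← hsmul]
  exact ⟨hlower.iteratedFDeriv_two_le_of_sub univ_mem hf (hg.const_smul ν) v,
    hupper.iteratedFDeriv_two_le_of_sub univ_mem (hg.const_smul C) hf v⟩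

end SecondDerivative

section NormRpow

variable {E : Type*} [NormedAddCommGroup E] [InnerProductSpace ℝ E] {p : ℝ}

lemma contDiffAt_normSq_rpow {n : WithTop ℕ∞} {x : E} (hx : x ≠ 0) :
    ContDiffAt ℝ n (fun y : E => (1 / p) * (‖y‖ ^ 2) ^ (p / 2)) x :=
  contDiffAt_const.mul <| (Real.contDiffAt_rpow_const_of_ne (by positivity)).comp x
    (contDiff_norm_sq ℝ).contDiffAt

lemma hasFDerivAt_normSq_rpow (hp : p ≠ 0) {x : E} (hx : x ≠ 0) :
    HasFDerivAt (fun y : E => (1 / p) * (‖y‖ ^ 2) ^ (p / 2))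
      ((‖x‖ ^ 2) ^ (p / 2 - 1) • innerSL ℝ x) x := by
  have hr : HasDerivAt (fun t : ℝ => t ^ (p / 2)) (p / 2 * (‖x‖ ^ 2) ^ (p / 2 - 1)) (‖x‖ ^ 2) :=
    Real.hasDerivAt_rpow_const (Or.inl (by positivity))
  refine ((hr.comp_hasFDerivAt x (hasStrictFDerivAt_norm_sq x).hasFDerivAt).const_mul
    (1 / p)).congr_fderiv ?_
  ext y
  simp only [smul_apply, smul_eq_mul, innerSL_apply_apply]
  field_simp
  ring

lemma iteratedFDeriv_two_normSq_rpow (hp : p ≠ 0) {x : E} (hx : x ≠ 0) (v : E) :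
    iteratedFDeriv ℝ 2 (fun y : E => (1 / p) * (‖y‖ ^ 2) ^ (p / 2)) x ![v, v]
      = (p - 2) * ‖x‖ ^ (p - 4) * inner ℝ x v ^ 2 + ‖x‖ ^ (p - 2) * ‖v‖ ^ 2 := by
  have hline : HasDerivAt (fun t : ℝ => x + t • v) v 0 := by
    simpa using ((hasDerivAt_id (0 : ℝ)).smul_const v).const_add x
  have hne : ∀ᶠ t in 𝓝 (0 : ℝ), x + t • v ≠ 0 :=
    hline.continuousAt.eventually_ne (by simpa using hx)
  have hfderiv : (fun t : ℝ => fderiv ℝ (fun y : E => (1 / p) * (‖y‖ ^ 2) ^ (p / 2)) (x + t • v) v)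
      =ᶠ[𝓝 0] fun t => (‖x + t • v‖ ^ 2) ^ (p / 2 - 1) * inner ℝ (x + t • v) v := by
    filter_upwards [hne] with t ht
    rw [(hasFDerivAt_normSq_rpow hp ht).fderiv, smul_apply, innerSL_apply_apply, smul_eq_mul]
  have hx0 : ‖x + (0 : ℝ) • v‖ ^ 2 ≠ 0 := by simpa using hx
  have hderiv := ((hline.norm_sq).rpow_const (p := p / 2 - 1) (Or.inl hx0)).mul
    (hline.inner ℝ (hasDerivAt_const (0 : ℝ) v))
  rw [((hasDerivAt_fderiv_apply_add_smul (contDiffAt_normSq_rpow hx) v).congr_of_eventuallyEq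
    hfderiv.symm).unique hderiv]
  simp only [zero_smul, add_zero, inner_zero_right, real_inner_self_eq_norm_sq]
  rw [← Real.rpow_two, ← Real.rpow_mul (norm_nonneg x), ← Real.rpow_mul (norm_nonneg x)]
  ring_nf

lemma iteratedFDeriv_two_normSq_rpow_mem_Icc (hp : p ≠ 0) (hp2 : p ≤ 2) {x : E} (hx : x ≠ 0)
    (v : E) :
    iteratedFDeriv ℝ 2 (fun y : E => (1 / p) * (‖y‖ ^ 2) ^ (p / 2)) x ![v, v]
      ∈ Set.Icc ((p - 1) * ‖x‖ ^ (p - 2) * ‖v‖ ^ 2) (‖x‖ ^ (p - 2) * ‖v‖ ^ 2) := by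
  have hx0 : 0 < ‖x‖ := norm_pos_iff.mpr hx
  have hpow : ‖x‖ ^ (p - 4) * ‖x‖ ^ 2 = ‖x‖ ^ (p - 2) := by
    rw [← Real.rpow_two, ← Real.rpow_add hx0]
    ring_nf
  have hcs : inner ℝ x v ^ 2 ≤ ‖x‖ ^ 2 * ‖v‖ ^ 2 := by
    rw [← mul_pow]
    exact sq_le_sq' (neg_le_of_abs_le (abs_real_inner_le_norm x v)) (real_inner_le_norm x v)
  have hnonneg : 0 ≤ ‖x‖ ^ (p - 4) := Real.rpow_nonneg hx0.le _
  rw [iteratedFDeriv_two_normSq_rpow hp hx]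
  constructor
  · have key := mul_le_mul_of_nonpos_left (mul_le_mul_of_nonneg_left hcs hnonneg)
      (sub_nonpos.2 hp2)
    linear_combination key - (p - 2) * ‖v‖ ^ 2 * hpow
  · nlinarith [mul_nonneg hnonneg (sq_nonneg (inner ℝ x v))]

end NormRpow

lemma PsiPK_zero {N : ℕ} {p : ℝ} (hp : p ≠ 0) (x : EuclideanSpace ℝ (Fin N)) :
    PsiPK N p 0 x = (1 / p) * (‖x‖ ^ 2) ^ (p / 2) := by
  simp [PsiPK, Real.zero_rpow hp]

theorem stmt_7_general (N : ℕ) (p ν C : ℝ) (hp : 1 < p) (hp2 : p < 2)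
    (hν : 0 < ν) (hνC : ν ≤ C)
    (Ψ : EuclideanSpace ℝ (Fin N) → ℝ)
    (hΨ2 : ContDiffOn ℝ 2 Ψ {(0 : EuclideanSpace ℝ (Fin N))}ᶜ)
    (hsand : SandwichCond N p 0 ν C Ψ) :
    ∀ η ξ : EuclideanSpace ℝ (Fin N), η ≠ 0 →
      (p - 1) * ν / ‖η‖ ^ (2 - p) * ‖ξ‖ ^ 2 ≤ (fderiv ℝ (fderiv ℝ Ψ) η ξ) ξ ∧
      (fderiv ℝ (fderiv ℝ Ψ) η ξ) ξ ≤ C / ‖η‖ ^ (2 - p) * ‖ξ‖ ^ 2 := by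
  intro η ξ hη
  have hp0 : p ≠ 0 := by linarith
  obtain ⟨hlower, hupper⟩ := hsand
  simp only [PsiPK_zero hp0] at hlower hupper
  have hΨη : ContDiffAt ℝ 2 Ψ η := hΨ2.contDiffAt (isOpen_compl_singleton.mem_nhds hη)
  obtain ⟨hνΦ, hCΦ⟩ := iteratedFDeriv_two_mem_Icc_of_convexOn_sub hlower hupper hΨη
    (contDiffAt_normSq_rpow hη) ξ
  obtain ⟨hΦlo, hΦhi⟩ := iteratedFDeriv_two_normSq_rpow_mem_Icc hp0 hp2.le hη ξ
  rw [← neg_sub 2 p, Real.rpow_neg (norm_nonneg η)] at hΦlo hΦhi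
  have hΨ'' : iteratedFDeriv ℝ 2 Ψ η ![ξ, ξ] = fderiv ℝ (fderiv ℝ Ψ) η ξ ξ :=
    iteratedFDeriv_two_apply Ψ η ![ξ, ξ]
  rw [← hΨ'']
  constructor
  · calc (p - 1) * ν / ‖η‖ ^ (2 - p) * ‖ξ‖ ^ 2
        = ν * ((p - 1) * (‖η‖ ^ (2 - p))⁻¹ * ‖ξ‖ ^ 2) := by ring
      _ ≤ _ := by gcongr
      _ ≤ _ := hνΦ
  · calc _ ≤ _ := hCΦ
      _ ≤ C * ((‖η‖ ^ (2 - p))⁻¹ * ‖ξ‖ ^ 2) := by gcongr; linarith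
      _ = C / ‖η‖ ^ (2 - p) * ‖ξ‖ ^ 2 := by ring

/-- Let `1 < p < 2` and let `Ψ` be `C¹` on `ℝᴺ`, `C²` away from the
origin, satisfying the sandwich condition for `Ψ_{p,0}` with constants `ν ≤ C`.
Then for every `η ≠ 0` and every `ξ`:
`(p-1)ν / |η|^(2-p) |ξ|² ≤ Ψ''(η)[ξ]² ≤ C / |η|^(2-p) |ξ|²`. -/
theorem stmt_7 (N : ℕ) (hN : 1 ≤ N) (p ν C : ℝ) (hp : 1 < p) (hp2 : p < 2)
    (hν : 0 < ν) (hνC : ν ≤ C)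
    (Ψ : EuclideanSpace ℝ (Fin N) → ℝ) (hΨ1 : ContDiff ℝ 1 Ψ)
    (hΨ2 : ContDiffOn ℝ 2 Ψ {(0 : EuclideanSpace ℝ (Fin N))}ᶜ)
    (hsand : SandwichCond N p 0 ν C Ψ) :
    ∀ η ξ : EuclideanSpace ℝ (Fin N), η ≠ 0 →
      (p - 1) * ν / ‖η‖ ^ (2 - p) * ‖ξ‖ ^ 2 ≤ (fderiv ℝ (fderiv ℝ Ψ) η ξ) ξ ∧
      (fderiv ℝ (fderiv ℝ Ψ) η ξ) ξ ≤ C / ‖η‖ ^ (2 - p) * ‖ξ‖ ^ 2 :=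
  stmt_7_general N p ν C hp hp2 hν hνC Ψ hΨ2 hsand
end

section
/- Let p > 1. There exist constants 0 < ν̌ ≤ Č, depending only on N and p, such that for every t ∈ [0,1] and every ξ ∈ ℝ^N both of the following hold: ν̌ (1 + |ξ|)^{p−2} ≤ ∫_{ℝ^N} ρ(y) (1 + |ξ − t y|)^{p−2} dy ≤ Č (1 + |ξ|)^{p−2}, and ν̌ (1 + |ξ|)^{p−2} ≤ ∫_{ℝ^N} ρ(y) (t + |ξ − y|)^{p−2} dy ≤ Č (1 + |ξ|)^{p−2}. -/
open Filter Topology MeasureTheory Set Real Metric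

lemma comparable_rpow {x y : ℝ} (hx : 0 < x) (hy : 0 < y) (hxy : x ≤ 2*y) (hyx : y ≤ 2*x) (a : ℝ) :
    x ^ a ≤ 2 ^ |a| * y ^ a := by
  rcases le_or_gt 0 a with h | h
  · rw [abs_of_nonneg h]
    calc x ^ a ≤ (2*y) ^ a := Real.rpow_le_rpow hx.le hxy h
    _ = 2 ^ a * y ^ a := Real.mul_rpow (by norm_num) hy.le
  · rw [abs_of_neg h]
    have h2 : y/2 ≤ x := by linarith
    calc x ^ a ≤ (y/2) ^ a := Real.rpow_le_rpow_of_nonpos (by positivity) h2 h.le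
    _ = y ^ a / 2 ^ a := Real.div_rpow hy.le (by norm_num : (0:ℝ) ≤ 2) a
    _ = 2 ^ (-a) * y ^ a := by rw [Real.rpow_neg (by norm_num)]; ring

lemma abs_rpow_intervalIntegrable {a : ℝ} (ha : -1 < a) (p q : ℝ) :
    IntervalIntegrable (fun u : ℝ => |u| ^ a) volume p q := by
  have h : ∀ c : ℝ, 0 ≤ c → IntervalIntegrable (fun u : ℝ => |u| ^ a) volume 0 c := by
    intro c hc
    rw [intervalIntegrable_iff, uIoc_of_le hc]
    have H : IntegrableOn (fun x : ℝ => x ^ a) (Ioc 0 c) volume := by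
      rw [← uIoc_of_le hc, ← intervalIntegrable_iff]
      exact intervalIntegral.intervalIntegrable_rpow' ha
    refine H.congr_fun (fun x hx => ?_) measurableSet_Ioc
    rw [abs_of_pos hx.1]
  have h' : ∀ c : ℝ, IntervalIntegrable (fun u : ℝ => |u| ^ a) volume 0 c := by
    intro c
    rcases le_total 0 c with hc | hc
    · exact h c hc
    · rw [IntervalIntegrable.iff_comp_neg]
      simpa using h (-c) (by linarith)
  exact (h' p).symm.trans (h' q)

lemma euclid_coord_le_norm {N : ℕ} (y : EuclideanSpace ℝ (Fin N)) (i : Fin N) :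
    |y i| ≤ ‖y‖ := by
  rw [EuclideanSpace.norm_eq]
  rw [← Real.sqrt_sq_eq_abs]
  apply Real.sqrt_le_sqrt
  have := Finset.single_le_sum (f := fun j => ‖y j‖ ^ 2) (fun j _ => by positivity) (Finset.mem_univ i)
  simpa [Real.norm_eq_abs, sq_abs] using this

lemma oneDim_integrableOn {a : ℝ} (ha : -1 < a) (c : ℝ) :
    IntegrableOn (fun s : ℝ => |c - s| ^ a) (Icc (-1:ℝ) 1) := by
  have h := (abs_rpow_intervalIntegrable ha (c + 1) (c - 1)).comp_sub_left c
  have e1 : c - (c + 1) = -1 := by ring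
  have e2 : c - (c - 1) = 1 := by ring
  rw [e1, e2, intervalIntegrable_iff_integrableOn_Icc_of_le (by norm_num)] at h
  exact h

lemma oneDim_bound {a : ℝ} (ha1 : -1 < a) {c : ℝ} (hc : |c| ≤ 3) :
    ∫ s in Icc (-1:ℝ) 1, |c - s| ^ a ≤ ∫ u in (-4:ℝ)..4, |u| ^ a := by
  rw [MeasureTheory.integral_Icc_eq_integral_Ioc,
    ← intervalIntegral.integral_of_le (by norm_num : (-1:ℝ) ≤ 1),
    intervalIntegral.integral_comp_sub_left (fun u : ℝ => |u| ^ a) c]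
  apply intervalIntegral.integral_mono_interval (by cases' abs_le.1 hc with h h'; linarith)
    (by linarith [abs_le.1 hc]) (by cases' abs_le.1 hc with h h'; linarith)
  · filter_upwards with x using by positivity
  · exact abs_rpow_intervalIntegrable ha1 _ _

lemma measurable_rpow_const' (a : ℝ) : Measurable fun x : ℝ => x ^ a := by
  have h : ∀ x : ℝ, x ^ a = if x = 0 then (if a = 0 then (1:ℝ) else 0)
      else Real.exp (Real.log x * a) * (if 0 ≤ x then 1 else Real.cos (a * π)) := by
    intro x
    rcases lt_trichotomy x 0 with hx | hx | hx
    · rw [Real.rpow_def_of_neg hx]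
      simp [hx.ne, not_le.2 hx, mul_comm]
    · subst hx
      by_cases ha : a = 0 <;> simp [ha, Real.zero_rpow]
    · rw [Real.rpow_def_of_pos hx]
      simp [hx.ne', hx.le]
  simp_rw [h]
  refine Measurable.ite (measurableSet_eq) measurable_const ?_
  exact (Real.measurable_log.mul_const a).exp.mul
    (Measurable.ite (measurableSet_le measurable_const measurable_id) measurable_const
      measurable_const)

lemma euclid_hyperplane_null {N : ℕ} (i : Fin N) (c : ℝ) :
    volume {y : EuclideanSpace ℝ (Fin N) | y i = c} = 0 := by
  have e := EuclideanSpace.volume_preserving_symm_measurableEquiv_toLp (Fin N)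
  have hs : MeasurableSet {x : Fin N → ℝ | x i = c} := by
    have : {x : Fin N → ℝ | x i = c} = (fun x : Fin N → ℝ => x i) ⁻¹' {c} := rfl
    rw [this]
    exact measurable_pi_apply i (measurableSet_singleton c)
  have h0 : volume {x : Fin N → ℝ | x i = c} = 0 := by
    rw [MeasureTheory.volume_pi]
    exact Measure.pi_hyperplane (fun _ => (volume : Measure ℝ)) i c
  have := e.measure_preimage hs.nullMeasurableSet
  rw [h0] at this
  exact this

lemma euclid_prod_integrable {N : ℕ} (g : Fin N → ℝ → ℝ) (hg : ∀ i, Integrable (g i)) :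
    Integrable (fun y : EuclideanSpace ℝ (Fin N) => ∏ i, g i (y i)) := by
  have h := Integrable.fintype_prod (𝕜 := ℝ) hg
  have e := EuclideanSpace.volume_preserving_symm_measurableEquiv_toLp (Fin N)
  exact (e.integrable_comp_emb (MeasurableEquiv.measurableEmbedding _)).2 h

lemma euclid_prod_integral {N : ℕ} (g : Fin N → ℝ → ℝ) :
    ∫ y : EuclideanSpace ℝ (Fin N), ∏ i, g i (y i) = ∏ i, ∫ x : ℝ, g i x := by
  have e := EuclideanSpace.volume_preserving_symm_measurableEquiv_toLp (Fin N)
  rw [← MeasureTheory.integral_fintype_prod_eq_prod (ι := Fin N) g]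
  exact e.integral_comp (MeasurableEquiv.measurableEmbedding _) (fun x => ∏ i, g i (x i))

set_option maxHeartbeats 2000000 in
/-- Fix a nonnegative smooth mollifier `ρ` supported in the closed unit
ball with unit integral.  For `p > 1` there exist constants `0 < ν̌ ≤ Č` such that for all
`t ∈ [0,1]` and `ξ ∈ ℝᴺ`:
`ν̌ (1 + |ξ|)^(p-2) ≤ ∫ ρ(y) (1 + |ξ - t y|)^(p-2) dy ≤ Č (1 + |ξ|)^(p-2)` and
`ν̌ (1 + |ξ|)^(p-2) ≤ ∫ ρ(y) (t + |ξ - y|)^(p-2) dy ≤ Č (1 + |ξ|)^(p-2)`. -/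
theorem stmt_9 (N : ℕ) (hN : 1 ≤ N) (p : ℝ) (hp : 1 < p)
    (ρ : EuclideanSpace ℝ (Fin N) → ℝ)
    (hρsmooth : ContDiff ℝ (⊤ : ℕ∞) ρ) (hρpos : ∀ y, 0 ≤ ρ y)
    (hρsupp : tsupport ρ ⊆ Metric.closedBall 0 1)
    (hρint : ∫ y, ρ y = 1) :
    ∃ νcheck Ccheck : ℝ, 0 < νcheck ∧ νcheck ≤ Ccheck ∧
      ∀ t : ℝ, t ∈ Set.Icc (0 : ℝ) 1 → ∀ ξ : EuclideanSpace ℝ (Fin N),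
        (νcheck * (1 + ‖ξ‖) ^ (p - 2) ≤
            (∫ y, ρ y * (1 + ‖ξ - t • y‖) ^ (p - 2)) ∧
          (∫ y, ρ y * (1 + ‖ξ - t • y‖) ^ (p - 2)) ≤
            Ccheck * (1 + ‖ξ‖) ^ (p - 2)) ∧
        (νcheck * (1 + ‖ξ‖) ^ (p - 2) ≤
            (∫ y, ρ y * (t + ‖ξ - y‖) ^ (p - 2)) ∧
          (∫ y, ρ y * (t + ‖ξ - y‖) ^ (p - 2)) ≤
            Ccheck * (1 + ‖ξ‖) ^ (p - 2)) := by
  have ha1 : (-1:ℝ) < p - 2 := by linarith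
  set a := p - 2 with ha_def
  -- basic facts about ρ
  have hρc : Continuous ρ := hρsmooth.continuous
  have hcs : HasCompactSupport ρ :=
    (isCompact_closedBall (0 : EuclideanSpace ℝ (Fin N)) 1).of_isClosed_subset
      (isClosed_tsupport ρ) hρsupp
  have hρInt : Integrable ρ := hρc.integrable_of_hasCompactSupport hcs
  obtain ⟨x₀, hMle⟩ := hρc.exists_forall_ge_of_hasCompactSupport hcs
  set M := ρ x₀ with hM_def
  have hM0 : 0 ≤ M := hρpos x₀
  have hsupp : ∀ y, ρ y ≠ 0 → ‖y‖ ≤ 1 := fun y hy =>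
    mem_closedBall_zero_iff.1 (hρsupp (subset_tsupport ρ hy))
  -- choice of δ
  set V := (volume (Metric.ball (0 : EuclideanSpace ℝ (Fin N)) 1)).toReal with hV_def
  have hV0 : 0 ≤ V := ENNReal.toReal_nonneg
  set δ : ℝ := min 1 (1/(2*(M+1)*(V+1))) with hδ_def
  have hδpos : 0 < δ := lt_min one_pos (by positivity)
  have hδ1 : δ ≤ 1 := min_le_left _ _
  have hδsmall : 2*(M+1)*(V+1)*δ ≤ 1 := by
    have h := min_le_right (1:ℝ) (1/(2*(M+1)*(V+1)))
    rw [← hδ_def] at h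
    rw [le_div_iff₀ (by positivity)] at h
    linarith
  -- mass of ρ on small balls
  have hballbound : ∀ ξ : EuclideanSpace ℝ (Fin N),
      ∫ y in Metric.closedBall ξ δ, ρ y ≤ 1/2 := by
    intro ξ
    have hvol : (volume (Metric.closedBall ξ δ)).toReal = δ ^ N * V := by
      rw [Measure.addHaar_closedBall _ _ hδpos.le, ENNReal.toReal_mul,
        ENNReal.toReal_ofReal (by positivity)]
      congr 2
      simp
    have h1 : ∫ y in Metric.closedBall ξ δ, ρ y ≤ ∫ _ in Metric.closedBall ξ δ, M :=
      setIntegral_mono_on hρInt.integrableOn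
        (integrableOn_const measure_closedBall_lt_top.ne) measurableSet_closedBall
        (fun y _ => hMle y)
    have h2 : ∫ _ in Metric.closedBall ξ δ, M = δ ^ N * V * M := by
      rw [setIntegral_const, smul_eq_mul, measureReal_def, hvol]
    have hδN : δ ^ N ≤ δ := by
      calc δ ^ N ≤ δ ^ 1 := pow_le_pow_of_le_one hδpos.le hδ1 hN
      _ = δ := pow_one δ
    have h3 : δ ^ N * V * M ≤ 1/2 := by
      have hδNV : δ ^ N * V * M ≤ δ * V * M := by
        have := mul_le_mul_of_nonneg_right (mul_le_mul_of_nonneg_right hδN hV0) hM0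
        linarith
      nlinarith [hδpos.le, hV0, hM0]
    linarith
  -- constants
  set B := ∫ u in (-4:ℝ)..4, |u| ^ a with hB_def
  have hB0 : 0 ≤ B := intervalIntegral.integral_nonneg (by norm_num) (fun u _ => by positivity)
  have h2abs_pos : (0:ℝ) < 2 ^ |a| := Real.rpow_pos_of_pos two_pos _
  have h2nabs_pos : (0:ℝ) < 2 ^ (-|a|) := Real.rpow_pos_of_pos two_pos _
  have h4abs_pos : (0:ℝ) < 4 ^ |a| := Real.rpow_pos_of_pos (by norm_num) _
  have h4nabs_pos : (0:ℝ) < 4 ^ (-|a|) := Real.rpow_pos_of_pos (by norm_num) _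
  have hδa_pos : (0:ℝ) < δ ^ a := Real.rpow_pos_of_pos hδpos _
  set ν : ℝ := min ((2:ℝ) ^ (-|a|)) ((δ ^ a * 4 ^ (-|a|))/2) with hν_def
  set C : ℝ := max ((2:ℝ) ^ |a|) (M * ((2:ℝ)^(N-1) * B) * 4 ^ |a|) with hC_def
  have hν_pos : 0 < ν := lt_min h2nabs_pos (by positivity)
  have hνC : ν ≤ C := by
    calc ν ≤ (2:ℝ) ^ (-|a|) := min_le_left _ _
    _ ≤ (2:ℝ) ^ |a| := Real.rpow_le_rpow_of_exponent_le one_le_two ((neg_abs_le a).trans (le_abs_self a))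
    _ ≤ C := le_max_left _ _
  have hC_pos : 0 < C := lt_of_lt_of_le hν_pos hνC
  refine ⟨ν, C, hν_pos, hνC, ?_⟩
  intro t ht ξ
  obtain ⟨ht0, ht1⟩ := ht
  have hbase0 : (0:ℝ) < 1 + ‖ξ‖ := by positivity
  have hxa_pos : 0 < (1+‖ξ‖) ^ a := Real.rpow_pos_of_pos hbase0 a
  -- support norm facts
  have hty : ∀ y : EuclideanSpace ℝ (Fin N), ρ y ≠ 0 → ‖t • y‖ ≤ 1 := by
    intro y hy
    rw [norm_smul]
    calc ‖t‖ * ‖y‖ ≤ 1 * 1 := by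
          apply mul_le_mul _ (hsupp y hy) (norm_nonneg _) zero_le_one
          rw [Real.norm_eq_abs, abs_of_nonneg ht0]; exact ht1
    _ = 1 := one_mul 1
  constructor
  · -- FIRST INTEGRAL
    have key1 : ∀ y : EuclideanSpace ℝ (Fin N),
        (ρ y * ((2:ℝ) ^ (-|a|) * (1+‖ξ‖) ^ a) ≤ ρ y * (1 + ‖ξ - t • y‖) ^ a ∧
         ρ y * (1 + ‖ξ - t • y‖) ^ a ≤ ρ y * ((2:ℝ) ^ |a| * (1+‖ξ‖) ^ a)) := by
      intro y
      by_cases hy : ρ y = 0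
      · simp [hy]
      · have h1 : (0:ℝ) < 1 + ‖ξ - t • y‖ := by positivity
        have hn1 : ‖ξ - t • y‖ ≤ ‖ξ‖ + 1 := by
          calc ‖ξ - t • y‖ ≤ ‖ξ‖ + ‖t • y‖ := norm_sub_le _ _
          _ ≤ ‖ξ‖ + 1 := by linarith [hty y hy]
        have hn2 : ‖ξ‖ ≤ ‖ξ - t • y‖ + 1 := by
          calc ‖ξ‖ = ‖(ξ - t • y) + t • y‖ := by rw [sub_add_cancel]
          _ ≤ ‖ξ - t • y‖ + ‖t • y‖ := norm_add_le _ _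
          _ ≤ ‖ξ - t • y‖ + 1 := by linarith [hty y hy]
        have hc1 : 1 + ‖ξ - t • y‖ ≤ 2 * (1 + ‖ξ‖) := by linarith [norm_nonneg ξ]
        have hc2 : 1 + ‖ξ‖ ≤ 2 * (1 + ‖ξ - t • y‖) := by linarith [norm_nonneg (ξ - t • y)]
        constructor
        · apply mul_le_mul_of_nonneg_left _ (hρpos y)
          have := comparable_rpow hbase0 h1 hc2 hc1 a
          rw [Real.rpow_neg (by norm_num : (0:ℝ) ≤ 2), inv_mul_le_iff₀ h2abs_pos]
          linarith
        · apply mul_le_mul_of_nonneg_left _ (hρpos y)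
          exact comparable_rpow h1 hbase0 hc1 hc2 a
    have hInt1 : Integrable (fun y : EuclideanSpace ℝ (Fin N) =>
        ρ y * (1 + ‖ξ - t • y‖) ^ a) := by
      apply Continuous.integrable_of_hasCompactSupport
      · apply hρc.mul
        apply Continuous.rpow_const
        · exact continuous_const.add ((continuous_const.sub (continuous_id.const_smul t)).norm)
        · intro y; left; positivity
      · exact hcs.mul_right
    constructor
    · calc ν * (1+‖ξ‖) ^ a ≤ (2:ℝ) ^ (-|a|) * (1+‖ξ‖) ^ a :=
            mul_le_mul_of_nonneg_right (min_le_left _ _) hxa_pos.le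
      _ = ∫ y, ρ y * ((2:ℝ) ^ (-|a|) * (1+‖ξ‖) ^ a) := by
            rw [MeasureTheory.integral_mul_const, hρint, one_mul]
      _ ≤ ∫ y, ρ y * (1 + ‖ξ - t • y‖) ^ a :=
            integral_mono (hρInt.mul_const _) hInt1 (fun y => (key1 y).1)
    · calc (∫ y, ρ y * (1 + ‖ξ - t • y‖) ^ a)
          ≤ ∫ y, ρ y * ((2:ℝ) ^ |a| * (1+‖ξ‖) ^ a) :=
            integral_mono hInt1 (hρInt.mul_const _) (fun y => (key1 y).2)
      _ = (2:ℝ) ^ |a| * (1+‖ξ‖) ^ a := by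
            rw [MeasureTheory.integral_mul_const, hρint, one_mul]
      _ ≤ C * (1+‖ξ‖) ^ a := mul_le_mul_of_nonneg_right (le_max_left _ _) hxa_pos.le
  · -- SECOND INTEGRAL
    have hub : ∀ y : EuclideanSpace ℝ (Fin N), ρ y ≠ 0 → t + ‖ξ - y‖ ≤ 2 * (1 + ‖ξ‖) := by
      intro y hy
      have : ‖ξ - y‖ ≤ ‖ξ‖ + ‖y‖ := norm_sub_le _ _
      have := hsupp y hy
      linarith [norm_nonneg ξ]
    have hlb : ∀ y : EuclideanSpace ℝ (Fin N), ρ y ≠ 0 → ‖ξ‖ - 1 ≤ ‖ξ - y‖ := by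
      intro y hy
      have h1 : ‖ξ‖ ≤ ‖ξ - y‖ + ‖y‖ := by
        calc ‖ξ‖ = ‖(ξ - y) + y‖ := by rw [sub_add_cancel]
        _ ≤ ‖ξ - y‖ + ‖y‖ := norm_add_le _ _
      have := hsupp y hy
      linarith
    rcases le_or_gt 0 a with hsgn | hsgn
    · -- case a ≥ 0
      have habs : |a| = a := abs_of_nonneg hsgn
      have hInt2 : Integrable (fun y : EuclideanSpace ℝ (Fin N) =>
          ρ y * (t + ‖ξ - y‖) ^ a) := by
        apply Continuous.integrable_of_hasCompactSupport
        · apply hρc.mul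
          apply Continuous.rpow_const
          · exact continuous_const.add ((continuous_const.sub continuous_id).norm)
          · intro y; right; exact hsgn
        · exact hcs.mul_right
      constructor
      · -- lower bound
        rcases le_or_gt 3 ‖ξ‖ with hξ | hξ
        · -- far case
          have key : ∀ y : EuclideanSpace ℝ (Fin N),
              ρ y * ((2:ℝ) ^ (-|a|) * (1+‖ξ‖) ^ a) ≤ ρ y * (t + ‖ξ - y‖) ^ a := by
            intro y
            by_cases hy : ρ y = 0
            · simp [hy]
            · apply mul_le_mul_of_nonneg_left _ (hρpos y)
              have h1 : (1 + ‖ξ‖)/2 ≤ t + ‖ξ - y‖ := by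
                have := hlb y hy; linarith
              have h2 : ((1 + ‖ξ‖)/2) ^ a ≤ (t + ‖ξ - y‖) ^ a :=
                Real.rpow_le_rpow (by positivity) h1 hsgn
              have h3 : ((1 + ‖ξ‖)/2) ^ a = 2 ^ (-|a|) * (1+‖ξ‖) ^ a := by
                rw [Real.div_rpow hbase0.le (by norm_num : (0:ℝ) ≤ 2),
                  habs, Real.rpow_neg (by norm_num : (0:ℝ) ≤ 2)]
                ring
              linarith
          calc ν * (1+‖ξ‖) ^ a ≤ (2:ℝ) ^ (-|a|) * (1+‖ξ‖) ^ a :=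
                mul_le_mul_of_nonneg_right (min_le_left _ _) hxa_pos.le
          _ = ∫ y, ρ y * ((2:ℝ) ^ (-|a|) * (1+‖ξ‖) ^ a) := by
                rw [MeasureTheory.integral_mul_const, hρint, one_mul]
          _ ≤ ∫ y, ρ y * (t + ‖ξ - y‖) ^ a :=
                integral_mono (hρInt.mul_const _) hInt2 key
        · -- near case : δ-trick
          set s := Metric.closedBall ξ δ with hs_def
          have hsm : MeasurableSet s := measurableSet_closedBall
          have h1 : ∫ y in s, ρ y ≤ 1/2 := hballbound ξ
          have h2 : (1:ℝ)/2 ≤ ∫ y in sᶜ, ρ y := by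
            have := MeasureTheory.integral_add_compl hsm hρInt
            rw [hρint] at this
            linarith
          have h3 : ∫ y in sᶜ, δ ^ a * ρ y ≤ ∫ y in sᶜ, ρ y * (t + ‖ξ - y‖) ^ a := by
            apply setIntegral_mono_on ((hρInt.const_mul _).integrableOn)
              (hInt2.integrableOn) hsm.compl
            intro y hy
            have hdist : δ < ‖ξ - y‖ := by
              have : ¬ (dist y ξ ≤ δ) := hy
              rw [dist_eq_norm] at this
              rw [norm_sub_rev]
              linarith [not_le.1 this]
            have : δ ^ a ≤ (t + ‖ξ - y‖) ^ a := by
              apply Real.rpow_le_rpow hδpos.le (by linarith) hsgn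
            calc δ ^ a * ρ y ≤ (t + ‖ξ - y‖) ^ a * ρ y :=
                  mul_le_mul_of_nonneg_right this (hρpos y)
            _ = ρ y * (t + ‖ξ - y‖) ^ a := mul_comm _ _
          have h4 : ∫ y in sᶜ, ρ y * (t + ‖ξ - y‖) ^ a ≤ ∫ y, ρ y * (t + ‖ξ - y‖) ^ a := by
            apply setIntegral_le_integral hInt2
            filter_upwards with y
            have h0 : (0:ℝ) ≤ (t + ‖ξ - y‖) ^ a := Real.rpow_nonneg (by positivity) a
            exact mul_nonneg (hρpos y) h0
          have h5 : δ ^ a * (1/2) ≤ ∫ y in sᶜ, δ ^ a * ρ y := by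
            rw [MeasureTheory.integral_const_mul]
            exact mul_le_mul_of_nonneg_left h2 hδa_pos.le
          have h6 : ν * (1+‖ξ‖) ^ a ≤ δ ^ a * (1/2) := by
            have hx4 : (1+‖ξ‖) ^ a ≤ 4 ^ a :=
              Real.rpow_le_rpow hbase0.le (by linarith) hsgn
            have h44 : (4:ℝ) ^ (-|a|) * 4 ^ a = 1 := by
              rw [habs, ← Real.rpow_add (by norm_num : (0:ℝ) < 4)]
              simp
            calc ν * (1+‖ξ‖) ^ a ≤ ((δ ^ a * 4 ^ (-|a|))/2) * 4 ^ a := by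
                  apply mul_le_mul (min_le_right _ _) hx4 hxa_pos.le
                  positivity
            _ = δ ^ a * (1/2) * (4 ^ (-|a|) * 4 ^ a) := by ring
            _ = δ ^ a * (1/2) := by rw [h44, mul_one]
          linarith
      · -- upper bound
        have key : ∀ y : EuclideanSpace ℝ (Fin N),
            ρ y * (t + ‖ξ - y‖) ^ a ≤ ρ y * ((2:ℝ) ^ |a| * (1+‖ξ‖) ^ a) := by
          intro y
          by_cases hy : ρ y = 0
          · simp [hy]
          · apply mul_le_mul_of_nonneg_left _ (hρpos y)
            have h2 : (t + ‖ξ - y‖) ^ a ≤ (2 * (1+‖ξ‖)) ^ a :=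
              Real.rpow_le_rpow (by positivity) (hub y hy) hsgn
            have h3 : (2 * (1+‖ξ‖)) ^ a = 2 ^ |a| * (1+‖ξ‖) ^ a := by
              rw [Real.mul_rpow (by norm_num : (0:ℝ) ≤ 2) hbase0.le, habs]
            linarith
        calc (∫ y, ρ y * (t + ‖ξ - y‖) ^ a)
            ≤ ∫ y, ρ y * ((2:ℝ) ^ |a| * (1+‖ξ‖) ^ a) :=
              integral_mono hInt2 (hρInt.mul_const _) key
        _ = (2:ℝ) ^ |a| * (1+‖ξ‖) ^ a := by
              rw [MeasureTheory.integral_mul_const, hρint, one_mul]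
        _ ≤ C * (1+‖ξ‖) ^ a := mul_le_mul_of_nonneg_right (le_max_left _ _) hxa_pos.le
    · -- case a < 0
      have habs : |a| = -a := abs_of_neg hsgn
      set i0 : Fin N := ⟨0, hN⟩ with hi0_def
      set c : ℝ := ξ i0 with hc_def
      have hae : ∀ᵐ y : EuclideanSpace ℝ (Fin N), y i0 ≠ c := by
        rw [ae_iff]
        convert euclid_hyperplane_null i0 c using 2
        simp
      -- the dominating product function
      set g : Fin N → ℝ → ℝ := fun i s =>
        if i = i0 then (Icc (-1:ℝ) 1).indicator (fun u => |c - u| ^ a) s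
        else (Icc (-1:ℝ) 1).indicator (fun _ => (1:ℝ)) s with hg_def
      have hg_nonneg : ∀ i s, 0 ≤ g i s := by
        intro i s
        simp only [hg_def]
        split_ifs
        · exact Set.indicator_nonneg (fun u _ => by positivity) s
        · exact Set.indicator_nonneg (fun u _ => zero_le_one) s
      have hg_int : ∀ i, Integrable (g i) := by
        intro i
        simp only [hg_def]
        split_ifs with hi
        · exact (integrable_indicator_iff measurableSet_Icc).2 (oneDim_integrableOn ha1 c)
        · exact (integrable_indicator_iff measurableSet_Icc).2
            (integrableOn_const measure_Icc_lt_top.ne)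
      set G : EuclideanSpace ℝ (Fin N) → ℝ := fun y => ∏ i, g i (y i) with hG_def
      have hGint : Integrable G := euclid_prod_integrable g hg_int
      have hG_nonneg : ∀ y, 0 ≤ G y := fun y => Finset.prod_nonneg (fun i _ => hg_nonneg i (y i))
      have hGval : ∀ y : EuclideanSpace ℝ (Fin N), ‖y‖ ≤ 1 → G y = |c - y i0| ^ a := by
        intro y hy
        have hcoord : ∀ i, y i ∈ Icc (-1:ℝ) 1 := by
          intro i
          have := (euclid_coord_le_norm y i).trans hy
          rw [abs_le] at this
          exact ⟨this.1, this.2⟩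
        simp only [hG_def]
        rw [← Finset.mul_prod_erase Finset.univ _ (Finset.mem_univ i0)]
        have h1 : g i0 (y i0) = |c - y i0| ^ a := by
          simp only [hg_def, if_pos rfl]
          exact Set.indicator_of_mem (hcoord i0) _
        have h2 : ∏ i ∈ Finset.univ.erase i0, g i (y i) = 1 := by
          apply Finset.prod_eq_one
          intro i hi
          simp only [hg_def, if_neg (Finset.ne_of_mem_erase hi)]
          exact Set.indicator_of_mem (hcoord i) _
        rw [h1, h2, mul_one]
      -- value of the integral of G
      have hGeq : ∫ y, G y = (∫ u in Icc (-1:ℝ) 1, |c - u| ^ a) * 2 ^ (N-1) := by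
        simp only [hG_def]
        rw [euclid_prod_integral g]
        rw [← Finset.mul_prod_erase Finset.univ _ (Finset.mem_univ i0)]
        have h1 : ∫ x : ℝ, g i0 x = ∫ u in Icc (-1:ℝ) 1, |c - u| ^ a := by
          simp only [hg_def, if_pos rfl]
          exact MeasureTheory.integral_indicator measurableSet_Icc
        have h2 : ∏ i ∈ Finset.univ.erase i0, (∫ x : ℝ, g i x) = 2 ^ (N-1) := by
          have he : ∀ i ∈ Finset.univ.erase i0, (∫ x : ℝ, g i x) = 2 := by
            intro i hi
            simp only [hg_def, if_neg (Finset.ne_of_mem_erase hi)]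
            rw [MeasureTheory.integral_indicator_const _ measurableSet_Icc]
            rw [measureReal_def, Real.volume_Icc]
            norm_num
          rw [Finset.prod_congr rfl he, Finset.prod_const,
            Finset.card_erase_of_mem (Finset.mem_univ i0), Finset.card_univ, Fintype.card_fin]
        rw [h1, h2]
      -- a.e. domination
      have hcble : ∀ y : EuclideanSpace ℝ (Fin N), |c - y i0| ≤ ‖ξ - y‖ := by
        intro y
        have h1 : (ξ - y) i0 = ξ i0 - y i0 := rfl
        have := euclid_coord_le_norm (ξ - y) i0
        rw [h1, ← hc_def] at this
        exact this
      have hdom : ∀ᵐ y : EuclideanSpace ℝ (Fin N),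
          ‖ρ y * (t + ‖ξ - y‖) ^ a‖ ≤ M * G y := by
        filter_upwards [hae] with y hy
        rw [Real.norm_eq_abs, abs_of_nonneg
          (mul_nonneg (hρpos y) (Real.rpow_nonneg (by positivity) a))]
        by_cases hρy : ρ y = 0
        · rw [hρy, zero_mul]
          exact mul_nonneg hM0 (hG_nonneg y)
        · rw [hGval y (hsupp y hρy)]
          have hbpos : 0 < |c - y i0| := by
            rw [abs_pos, sub_ne_zero]
            exact fun h => hy h.symm
          have hble : |c - y i0| ≤ t + ‖ξ - y‖ := by
            have := hcble y
            linarith [norm_nonneg (ξ - y)]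
          exact mul_le_mul (hMle y)
            (Real.rpow_le_rpow_of_nonpos hbpos hble hsgn.le)
            (Real.rpow_nonneg (by positivity) a) hM0
      have hf2meas : AEStronglyMeasurable
          (fun y : EuclideanSpace ℝ (Fin N) => ρ y * (t + ‖ξ - y‖) ^ a) volume := by
        apply Measurable.aestronglyMeasurable
        apply hρc.measurable.mul
        exact (measurable_rpow_const' a).comp
          (measurable_const.add (continuous_const.sub continuous_id).norm.measurable)
      have hInt2 : Integrable (fun y : EuclideanSpace ℝ (Fin N) =>
          ρ y * (t + ‖ξ - y‖) ^ a) :=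
        (hGint.const_mul M).mono' hf2meas hdom
      constructor
      · -- lower bound
        have key : ∀ᵐ y : EuclideanSpace ℝ (Fin N),
            ρ y * ((2:ℝ) ^ (-|a|) * (1+‖ξ‖) ^ a) ≤ ρ y * (t + ‖ξ - y‖) ^ a := by
          filter_upwards [hae] with y hy
          by_cases hρy : ρ y = 0
          · simp [hρy]
          · apply mul_le_mul_of_nonneg_left _ (hρpos y)
            have hbpos : 0 < t + ‖ξ - y‖ := by
              have h1 : 0 < |c - y i0| := by
                rw [abs_pos, sub_ne_zero]; exact fun h => hy h.symm
              linarith [hcble y]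
            have h2 : (2 * (1+‖ξ‖)) ^ a ≤ (t + ‖ξ - y‖) ^ a :=
              Real.rpow_le_rpow_of_nonpos hbpos (hub y hρy) hsgn.le
            have h3 : (2 * (1+‖ξ‖)) ^ a = 2 ^ (-|a|) * (1+‖ξ‖) ^ a := by
              rw [Real.mul_rpow (by norm_num : (0:ℝ) ≤ 2) hbase0.le, habs, neg_neg]
            linarith
        calc ν * (1+‖ξ‖) ^ a ≤ (2:ℝ) ^ (-|a|) * (1+‖ξ‖) ^ a :=
              mul_le_mul_of_nonneg_right (min_le_left _ _) hxa_pos.le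
        _ = ∫ y, ρ y * ((2:ℝ) ^ (-|a|) * (1+‖ξ‖) ^ a) := by
              rw [MeasureTheory.integral_mul_const, hρint, one_mul]
        _ ≤ ∫ y, ρ y * (t + ‖ξ - y‖) ^ a :=
              integral_mono_ae (hρInt.mul_const _) hInt2 key
      · -- upper bound
        rcases le_or_gt 3 ‖ξ‖ with hξ | hξ
        · -- far case
          have key : ∀ y : EuclideanSpace ℝ (Fin N),
              ρ y * (t + ‖ξ - y‖) ^ a ≤ ρ y * ((2:ℝ) ^ |a| * (1+‖ξ‖) ^ a) := by
            intro y
            by_cases hρy : ρ y = 0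
            · simp [hρy]
            · apply mul_le_mul_of_nonneg_left _ (hρpos y)
              have h1 : (1 + ‖ξ‖)/2 ≤ t + ‖ξ - y‖ := by
                have := hlb y hρy; linarith
              have h2 : (t + ‖ξ - y‖) ^ a ≤ ((1 + ‖ξ‖)/2) ^ a :=
                Real.rpow_le_rpow_of_nonpos (by positivity) h1 hsgn.le
              have h3 : ((1 + ‖ξ‖)/2) ^ a = 2 ^ |a| * (1+‖ξ‖) ^ a := by
                rw [Real.div_rpow hbase0.le (by norm_num : (0:ℝ) ≤ 2), habs,
                  Real.rpow_neg (by norm_num : (0:ℝ) ≤ 2) a]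
                ring
              linarith
          calc (∫ y, ρ y * (t + ‖ξ - y‖) ^ a)
              ≤ ∫ y, ρ y * ((2:ℝ) ^ |a| * (1+‖ξ‖) ^ a) :=
                integral_mono hInt2 (hρInt.mul_const _) key
          _ = (2:ℝ) ^ |a| * (1+‖ξ‖) ^ a := by
                rw [MeasureTheory.integral_mul_const, hρint, one_mul]
          _ ≤ C * (1+‖ξ‖) ^ a := mul_le_mul_of_nonneg_right (le_max_left _ _) hxa_pos.le
        · -- near case
          have hIc : |c| ≤ 3 := by
            have := euclid_coord_le_norm ξ i0
            rw [← hc_def] at this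
            linarith
          have hBc : ∫ u in Icc (-1:ℝ) 1, |c - u| ^ a ≤ B := oneDim_bound ha1 hIc
          have h1 : (∫ y, ρ y * (t + ‖ξ - y‖) ^ a) ≤ ∫ y, M * G y := by
            apply integral_mono_ae hInt2 (hGint.const_mul M)
            filter_upwards [hdom] with y hy
            calc ρ y * (t + ‖ξ - y‖) ^ a ≤ ‖ρ y * (t + ‖ξ - y‖) ^ a‖ := le_abs_self _
            _ ≤ M * G y := hy
          have h2 : ∫ y, M * G y = M * ((∫ u in Icc (-1:ℝ) 1, |c - u| ^ a) * 2 ^ (N-1)) := by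
            rw [MeasureTheory.integral_const_mul, hGeq]
          have h3 : M * ((∫ u in Icc (-1:ℝ) 1, |c - u| ^ a) * 2 ^ (N-1))
              ≤ M * ((2:ℝ)^(N-1) * B) := by
            apply mul_le_mul_of_nonneg_left _ hM0
            calc (∫ u in Icc (-1:ℝ) 1, |c - u| ^ a) * 2 ^ (N-1) ≤ B * 2 ^ (N-1) :=
                  mul_le_mul_of_nonneg_right hBc (by positivity)
            _ = (2:ℝ)^(N-1) * B := mul_comm _ _
          have h4 : M * ((2:ℝ)^(N-1) * B) ≤ C * (1+‖ξ‖) ^ a := by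
            have hx4 : (4:ℝ) ^ a ≤ (1+‖ξ‖) ^ a :=
              Real.rpow_le_rpow_of_nonpos hbase0 (by linarith) hsgn.le
            have h44 : (4:ℝ) ^ |a| * 4 ^ a = 1 := by
              rw [habs, ← Real.rpow_add (by norm_num : (0:ℝ) < 4)]
              simp
            calc M * ((2:ℝ)^(N-1) * B)
                = (M * ((2:ℝ)^(N-1) * B) * 4 ^ |a|) * 4 ^ a := by
                  rw [mul_assoc _ _ ((4:ℝ) ^ a), h44, mul_one]
            _ ≤ C * 4 ^ a := by
                  apply mul_le_mul_of_nonneg_right (le_max_right _ _)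
                  positivity
            _ ≤ C * (1+‖ξ‖) ^ a := mul_le_mul_of_nonneg_left hx4 hC_pos.le
          linarith
end

section
/- Let N ≥ 1, p > 1, κ ≥ 0 and 0 < ν ≤ C. Let Ψ : ℝ^N → ℝ be of class C¹ with Ψ(0) = 0 and ∇Ψ(0) = 0, satisfying the sandwich condition for Ψ_{p,κ} with constants ν, C; assume moreover that Ψ is of class C² on ℝ^N \ {0} if κ = 0 and 1 < p < 2, and of class C² on all of ℝ^N otherwise. Then the gradient map ∇Ψ : ℝ^N → ℝ^N is locally Hölder continuous: there exists α ∈ (0,1] such that for every R > 0 there is a constant L ≥ 0 with |∇Ψ(x) − ∇Ψ(y)| ≤ L |x − y|^α for all x, y ∈ ℝ^N with |x| ≤ R and |y| ≤ R. -/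
open Filter Topology

/-!
`Ψ` is convex, being the sum of the convex functions `Ψ - ν Ψ_{p,κ}` and `ν Ψ_{p,κ}`, so its
Bregman distance `D(x, z) = Ψ z - Ψ x - ⟪∇Ψ x, z - x⟫` is nonnegative, and convexity of
`C Ψ_{p,κ} - Ψ` bounds it by `C` times the Bregman distance of `Ψ_{p,κ}`. The latter is
`O(|z - x| ^ (1 + α))` on bounded sets: as a function of `t = κ² + |ξ|²`, `Ψ_{p,κ}` is
`t ^ (p/2) / p` up to a constant, whose tangent lines lie above it for `p ≤ 2` and below
it for `p ≥ 2`.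

Such a two-sided control forces `∇Ψ` to be `α`-Hölder. With `u` the unit vector along
`∇Ψ x - ∇Ψ y` and `w = x - s u`, the three-point identity
`D(y, w) = D(x, w) + D(y, x) + ⟪∇Ψ x - ∇Ψ y, w - x⟫` and `D(y, w) ≥ 0` give
`s |∇Ψ x - ∇Ψ y| ≤ A (s ^ (1 + α) + |x - y| ^ (1 + α))`; take `s = min |x - y| 1`.
-/

open Set
open scoped InnerProductSpace

theorem sq_rpow_div_two {t : ℝ} (ht : 0 ≤ t) (s : ℝ) : (t ^ 2) ^ (s / 2) = t ^ s := by
  rw [← Real.rpow_natCast_mul ht]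
  congr 1
  push_cast
  ring

theorem rpow_le_rpow_sub_mul_rpow {r R β γ : ℝ} (hr : 0 < r) (hrR : r ≤ R) (hβγ : β ≤ γ) :
    r ^ γ ≤ R ^ (γ - β) * r ^ β := by
  rw [← sub_add_cancel γ β, Real.rpow_add hr, add_sub_cancel_right]
  gcongr

theorem ConvexOn.add_le_of_hasFDerivAt {E : Type*} [NormedAddCommGroup E] [NormedSpace ℝ E]
    {f : E → ℝ} {f' : E →L[ℝ] ℝ} {s : Set E} {x z : E} (hf : ConvexOn ℝ s f) (hx : x ∈ s)
    (hz : z ∈ s) (hf' : HasFDerivAt f f' x) : f x + f' (z - x) ≤ f z := by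
  have hline : ConvexOn ℝ (AffineMap.lineMap x z ⁻¹' s) (f ∘ AffineMap.lineMap x z) :=
    hf.comp_affineMap _
  have hderiv : HasDerivAt (f ∘ AffineMap.lineMap x z) (f' (z - x)) (0 : ℝ) :=
    (by simpa using hf' : HasFDerivAt f f' (AffineMap.lineMap x z (0 : ℝ))).comp_hasDerivAt _
      AffineMap.hasDerivAt_lineMap
  have := hline.le_slope_of_hasDerivAt (by simpa using hx) (by simpa using hz) zero_lt_one hderiv
  simp only [slope_def_field, Function.comp_apply, AffineMap.lineMap_apply_one,
    AffineMap.lineMap_apply_zero, sub_zero, div_one] at this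
  linarith

theorem rpow_tangent_le_rpow {a b m : ℝ} (ha : 0 ≤ a) (hb : 0 ≤ b) (hm : 1 ≤ m) :
    a ^ m + m * a ^ (m - 1) * (b - a) ≤ b ^ m := by
  have := (convexOn_rpow hm).add_le_of_hasFDerivAt ha hb
    (Real.hasDerivAt_rpow_const (Or.inr hm)).hasFDerivAt
  simp only [ContinuousLinearMap.toSpanSingleton_apply, smul_eq_mul] at this
  linarith

theorem rpow_le_rpow_tangent {a b m : ℝ} (ha : 0 < a) (hb : 0 ≤ b) (hm₀ : 0 ≤ m) (hm₁ : m ≤ 1) :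
    b ^ m ≤ a ^ m + m * a ^ (m - 1) * (b - a) := by
  have := (Real.concaveOn_rpow hm₀ hm₁).neg.add_le_of_hasFDerivAt ha.le hb
    (Real.hasDerivAt_rpow_const (Or.inl ha.ne')).neg.hasFDerivAt
  simp only [Pi.neg_apply, ContinuousLinearMap.toSpanSingleton_apply, smul_eq_mul] at this
  linarith

theorem exists_abs_rpow_sub_rpow_le {q : ℝ} (hq : 0 < q) (S : ℝ) :
    ∃ c, 0 ≤ c ∧ ∀ a ∈ Icc 0 S, ∀ b ∈ Icc 0 S, |b ^ q - a ^ q| ≤ c * |b - a| ^ min 1 q := by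
  suffices h : ∃ c, 0 ≤ c ∧ ∀ a ∈ Icc 0 S, ∀ b ∈ Icc 0 S, a ≤ b →
      b ^ q - a ^ q ≤ c * (b - a) ^ min 1 q by
    obtain ⟨c, hc, h⟩ := h
    refine ⟨c, hc, fun a ha b hb => ?_⟩
    rcases le_total a b with hab | hba
    · have := Real.rpow_le_rpow ha.1 hab hq.le
      rw [abs_of_nonneg (by linarith), abs_of_nonneg (by linarith)]
      exact h a ha b hb hab
    · have := Real.rpow_le_rpow hb.1 hba hq.le
      rw [abs_of_nonpos (by linarith), abs_of_nonpos (by linarith), neg_sub, neg_sub]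
      exact h b hb a ha hba
  rcases le_or_gt q 1 with hq1 | hq1
  · refine ⟨1, zero_le_one, fun a ha b _ hab => ?_⟩
    have := Real.rpow_add_le_add_rpow ha.1 (sub_nonneg.2 hab) hq.le hq1
    rw [add_sub_cancel] at this
    rw [min_eq_right hq1]
    linarith
  · refine ⟨q * |S| ^ (q - 1), by positivity, fun a ha b hb hab => ?_⟩
    have htan := rpow_tangent_le_rpow hb.1 ha.1 hq1.le
    have hmono : b ^ (q - 1) ≤ |S| ^ (q - 1) :=
      Real.rpow_le_rpow hb.1 (hb.2.trans (le_abs_self S)) (by linarith)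
    have := mul_le_mul_of_nonneg_left (mul_le_mul_of_nonneg_right hmono (sub_nonneg.2 hab)) hq.le
    rw [min_eq_left hq1.le, Real.rpow_one]
    linarith

theorem le_mul_rpow_of_forall_mul_le {D A r ρ α : ℝ} (hA : 0 ≤ A) (hα : 0 ≤ α) (hr : 0 < r)
    (hrρ : r ≤ ρ) (h : ∀ s, 0 < s → s ≤ 1 → s * D ≤ A * s ^ (1 + α) + A * r ^ (1 + α)) :
    D ≤ A * (2 + ρ) * r ^ α := by
  have hpow : r ^ (1 + α) = r * r ^ α := by rw [Real.rpow_add hr, Real.rpow_one]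
  have hrα : 0 ≤ r ^ α := by positivity
  rcases le_or_gt r 1 with hr1 | hr1
  · have := h r hr hr1
    rw [hpow] at this
    have : D ≤ 2 * A * r ^ α := by nlinarith
    nlinarith [mul_nonneg hA hrα]
  · have := h 1 one_pos le_rfl
    rw [Real.one_rpow, hpow] at this
    have h1 : 1 ≤ r ^ α := Real.one_le_rpow hr1.le hα
    nlinarith [mul_le_mul_of_nonneg_left h1 hA, mul_le_mul_of_nonneg_right hrρ (mul_nonneg hA hrα)]

theorem abs_norm_sq_sub_norm_sq_le {E : Type*} [NormedAddCommGroup E] (z x : E) :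
    |‖z‖ ^ 2 - ‖x‖ ^ 2| ≤ (‖z‖ + ‖x‖) * ‖z - x‖ := by
  rw [sq_sub_sq, abs_mul, abs_of_nonneg (by positivity)]
  gcongr
  exact abs_norm_sub_norm_le z x

theorem norm_toLp_pair_sq {E : Type*} [NormedAddCommGroup E] (κ : ℝ) (ξ : E) :
    ‖WithLp.toLp 2 (κ, ξ)‖ ^ 2 = κ ^ 2 + ‖ξ‖ ^ 2 := by
  simp [WithLp.prod_norm_sq_eq_of_L2]

theorem convexOn_norm_toLp_pair {E : Type*} [NormedAddCommGroup E] [NormedSpace ℝ E] (κ : ℝ) :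
    ConvexOn ℝ univ fun ξ : E => ‖WithLp.toLp 2 (κ, ξ)‖ := by
  refine ⟨convex_univ, fun ξ _ η _ a b ha hb hab => ?_⟩
  have hsplit : WithLp.toLp 2 (κ, a • ξ + b • η)
      = a • WithLp.toLp 2 (κ, ξ) + b • WithLp.toLp 2 (κ, η) := by
    rw [← WithLp.toLp_smul, ← WithLp.toLp_smul, ← WithLp.toLp_add, Prod.smul_mk, Prod.smul_mk,
      Prod.mk_add_mk, smul_eq_mul, smul_eq_mul, ← add_mul, hab, one_mul]
  simp only [smul_eq_mul, hsplit]
  refine (norm_add_le _ _).trans_eq ?_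
  rw [norm_smul, norm_smul, Real.norm_of_nonneg ha, Real.norm_of_nonneg hb]

section Bregman

variable {E : Type*} [NormedAddCommGroup E] [InnerProductSpace ℝ E]

theorem norm_sq_sub_norm_sq_eq (x z : E) :
    ‖z‖ ^ 2 - ‖x‖ ^ 2 = ‖z - x‖ ^ 2 + 2 * ⟪x, z - x⟫_ℝ := by
  rw [norm_sub_sq_real, inner_sub_right, real_inner_self_eq_norm_sq, real_inner_comm]
  ring

def bregman (f : E → ℝ) (f' : E → E) (x z : E) : ℝ := f z - f x - ⟪f' x, z - x⟫_ℝ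

@[simp]
theorem bregman_self (f : E → ℝ) (f' : E → E) (x : E) : bregman f f' x x = 0 := by
  simp [bregman]

theorem bregman_three_point (f : E → ℝ) (f' : E → E) (x y w : E) :
    bregman f f' y w = bregman f f' x w + bregman f f' y x + ⟪f' x - f' y, w - x⟫_ℝ := by
  simp only [bregman, inner_sub_left, inner_sub_right]
  ring

theorem ConvexOn.bregman_nonneg [CompleteSpace E] {f : E → ℝ} {f' : E → E} {s : Set E}
    {x z : E} (hf : ConvexOn ℝ s f) (hx : x ∈ s) (hz : z ∈ s) (hf' : HasGradientAt f (f' x) x) :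
    0 ≤ bregman f f' x z := by
  have := hf.add_le_of_hasFDerivAt hx hz hf'.hasFDerivAt
  rw [InnerProductSpace.toDual_apply_apply] at this
  rw [bregman]
  linarith

theorem bregman_le_mul_bregman_of_convexOn_sub [CompleteSpace E] {f g : E → ℝ} {f' g' : E → E}
    {c : ℝ} (hc : ConvexOn ℝ univ fun ξ => c * g ξ - f ξ) (hf : ∀ x, HasGradientAt f (f' x) x)
    (hg : ∀ x, HasGradientAt g (g' x) x) (x z : E) :
    bregman f f' x z ≤ c * bregman g g' x z := by
  have hgrad : HasGradientAt (fun ξ => c * g ξ - f ξ) (c • g' x - f' x) x := by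
    rw [hasGradientAt_iff_hasFDerivAt, map_sub, map_smul]
    exact ((hg x).hasFDerivAt.const_mul c).sub (hf x).hasFDerivAt
  have := hc.bregman_nonneg (f' := fun ξ => c • g' ξ - f' ξ) (mem_univ x) (mem_univ z) hgrad
  simp only [bregman, inner_sub_left, real_inner_smul_left] at this ⊢
  linarith

theorem norm_sub_le_of_bregman_le {f : E → ℝ} {f' : E → E} {α R A : ℝ} (hα : 0 ≤ α)
    (hA : 0 ≤ A) (hnonneg : ∀ x z, 0 ≤ bregman f f' x z)
    (hle : ∀ x z, ‖x‖ ≤ R + 1 → ‖z‖ ≤ R + 1 → bregman f f' x z ≤ A * ‖z - x‖ ^ (1 + α))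
    {x y : E} (hx : ‖x‖ ≤ R) (hy : ‖y‖ ≤ R) :
    ‖f' x - f' y‖ ≤ A * (2 + 2 * R) * ‖x - y‖ ^ α := by
  have hR : 0 ≤ R := (norm_nonneg x).trans hx
  rcases eq_or_ne (f' x) (f' y) with hfxy | hfxy
  · rw [hfxy, sub_self, norm_zero]
    positivity
  have hxy : 0 < ‖x - y‖ := norm_pos_iff.2 (sub_ne_zero.2 fun h => hfxy (h ▸ rfl))
  refine le_mul_rpow_of_forall_mul_le hA hα hxy
    ((norm_sub_le x y).trans (by linarith)) fun s hs0 hs1 => ?_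
  set u := ‖f' x - f' y‖⁻¹ • (f' x - f' y)
  have hu : ‖u‖ = 1 := norm_smul_inv_norm (sub_ne_zero.2 hfxy)
  have hinner : ⟪f' x - f' y, (x - s • u) - x⟫_ℝ = -(s * ‖f' x - f' y‖) := by
    rw [sub_sub_cancel_left, inner_neg_right, inner_smul_right, real_inner_smul_right,
      real_inner_self_eq_norm_sq]
    field_simp
  have hsu : ‖(x - s • u) - x‖ = s := by
    rw [sub_sub_cancel_left, norm_neg, norm_smul, hu, Real.norm_of_nonneg hs0.le, mul_one]
  have hw : ‖x - s • u‖ ≤ R + 1 :=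
    calc ‖x - s • u‖ ≤ ‖x‖ + ‖s • u‖ := norm_sub_le _ _
      _ ≤ R + 1 := by rw [norm_smul, hu, Real.norm_of_nonneg hs0.le]; linarith
  have h3 := bregman_three_point f f' x y (x - s • u)
  have h1 := hle x (x - s • u) (by linarith) hw
  have h2 := hle y x (by linarith) (by linarith)
  rw [hsu] at h1
  linarith [hnonneg y (x - s • u)]

end Bregman

section PsiPK

variable {N : ℕ} {p κ : ℝ}

noncomputable def gradPK (N : ℕ) (p κ : ℝ) (x : EuclideanSpace ℝ (Fin N)) :
    EuclideanSpace ℝ (Fin N) :=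
  (κ ^ 2 + ‖x‖ ^ 2) ^ ((p - 2) / 2) • x

theorem psiPK_eq_norm_rpow (ξ : EuclideanSpace ℝ (Fin N)) :
    PsiPK N p κ ξ = 1 / p * (‖WithLp.toLp 2 (κ, ξ)‖ ^ p - κ ^ p) := by
  rw [PsiPK, ← norm_toLp_pair_sq, sq_rpow_div_two (norm_nonneg _)]

theorem convexOn_psiPK (hp : 1 ≤ p) : ConvexOn ℝ univ (PsiPK N p κ) := by
  refine ⟨convex_univ, fun ξ _ η _ a b ha hb hab => ?_⟩
  simp only [psiPK_eq_norm_rpow, smul_eq_mul]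
  set h : EuclideanSpace ℝ (Fin N) → ℝ := fun ξ => ‖WithLp.toLp 2 (κ, ξ)‖
  have hmono : h (a • ξ + b • η) ^ p ≤ (a * h ξ + b * h η) ^ p :=
    Real.rpow_le_rpow (norm_nonneg _)
      ((convexOn_norm_toLp_pair κ).2 trivial trivial ha hb hab) (by linarith)
  have hconv : (a * h ξ + b * h η) ^ p ≤ a * h ξ ^ p + b * h η ^ p :=
    (convexOn_rpow hp).2 (norm_nonneg _) (norm_nonneg _) ha hb hab
  have := mul_le_mul_of_nonneg_left (hmono.trans hconv) (by positivity : 0 ≤ 1 / p)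
  calc 1 / p * (h (a • ξ + b • η) ^ p - κ ^ p)
      ≤ 1 / p * (a * h ξ ^ p + b * h η ^ p - (a + b) * κ ^ p) := by rw [hab]; nlinarith
    _ = a * (1 / p * (h ξ ^ p - κ ^ p)) + b * (1 / p * (h η ^ p - κ ^ p)) := by ring

theorem hasGradientAt_psiPK (hp : 1 < p) (x : EuclideanSpace ℝ (Fin N)) :
    HasGradientAt (PsiPK N p κ) (gradPK N p κ x) x := by
  have hpair :=
    (WithLp.prodContinuousLinearEquiv 2 ℝ ℝ (EuclideanSpace ℝ (Fin N))).symm.hasFDerivAt.comp x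
      ((hasFDerivAt_const κ x).prodMk (hasFDerivAt_id (𝕜 := ℝ) x))
  have := (((hasFDerivAt_norm_rpow _ hp).comp x hpair).sub_const (κ ^ p)).const_mul (1 / p)
  rw [hasGradientAt_iff_hasFDerivAt, funext psiPK_eq_norm_rpow]
  refine this.congr_fderiv (ContinuousLinearMap.ext fun v => ?_)
  simp only [gradPK, one_div, id_eq, Function.comp_apply, smul_eq_mul, map_smul,
    WithLp.prodContinuousLinearEquiv_symm_apply, ContinuousLinearMap.smul_comp, smul_apply,
    ContinuousLinearMap.comp_apply, ContinuousLinearMap.prod_apply, zero_apply,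
    ContinuousLinearMap.id_apply, ContinuousLinearEquiv.coe_coe, coe_innerSL_apply,
    WithLp.prod_inner_apply, RCLike.inner_apply, Real.ringHom_apply, zero_mul, zero_add,
    InnerProductSpace.toDual_apply_apply]
  rw [← sq_rpow_div_two (norm_nonneg _), norm_toLp_pair_sq]
  field_simp

theorem bregman_psiPK (x z : EuclideanSpace ℝ (Fin N)) :
    bregman (PsiPK N p κ) (gradPK N p κ) x z =
      1 / p * ((κ ^ 2 + ‖z‖ ^ 2) ^ (p / 2) - (κ ^ 2 + ‖x‖ ^ 2) ^ (p / 2))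
        - (κ ^ 2 + ‖x‖ ^ 2) ^ ((p - 2) / 2) * ⟪x, z - x⟫_ℝ := by
  rw [bregman, PsiPK, PsiPK, gradPK, real_inner_smul_left]
  ring

theorem bregman_psiPK_le_of_le_two_of_pos (hp : 0 < p) (hp2 : p ≤ 2)
    {x : EuclideanSpace ℝ (Fin N)} (hA : 0 < κ ^ 2 + ‖x‖ ^ 2) (z : EuclideanSpace ℝ (Fin N)) :
    bregman (PsiPK N p κ) (gradPK N p κ) x z ≤
      (κ ^ 2 + ‖x‖ ^ 2) ^ ((p - 2) / 2) * ‖z - x‖ ^ 2 / 2 := by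
  have htan := rpow_le_rpow_tangent hA (by positivity : 0 ≤ κ ^ 2 + ‖z‖ ^ 2)
    (by positivity : 0 ≤ p / 2) (by linarith)
  rw [show p / 2 - 1 = (p - 2) / 2 by ring, add_sub_add_left_eq_sub,
    norm_sq_sub_norm_sq_eq x z] at htan
  have := mul_le_mul_of_nonneg_left htan (by positivity : 0 ≤ 1 / p)
  rw [bregman_psiPK]
  field_simp at this ⊢
  linarith

theorem bregman_psiPK_le_of_le_sq (hp : 1 < p) (hp2 : p ≤ 2) {x z : EuclideanSpace ℝ (Fin N)}
    (hA : κ ^ 2 + ‖x‖ ^ 2 ≤ ‖z - x‖ ^ 2) :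
    bregman (PsiPK N p κ) (gradPK N p κ) x z ≤ (2 ^ p / p + 1) * ‖z - x‖ ^ p := by
  rcases eq_or_ne z x with rfl | hzx
  · simp [Real.zero_rpow (by linarith : p ≠ 0)]
  have hr : 0 < ‖z - x‖ := norm_pos_iff.2 (sub_ne_zero.2 hzx)
  rw [bregman_psiPK]
  set A := κ ^ 2 + ‖x‖ ^ 2
  set r := ‖z - x‖
  have hxr : ‖x‖ ≤ r :=
    (pow_le_pow_iff_left₀ (norm_nonneg x) hr.le two_ne_zero).1 (by linarith [sq_nonneg κ])
  have hz : ‖z‖ ≤ 2 * r := by linarith [norm_sub_norm_le z x]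
  have hpow : (κ ^ 2 + ‖z‖ ^ 2) ^ (p / 2) ≤ A ^ (p / 2) + 2 ^ p * r ^ p :=
    calc (κ ^ 2 + ‖z‖ ^ 2) ^ (p / 2) ≤ (A + ‖z‖ ^ 2) ^ (p / 2) :=
          Real.rpow_le_rpow (by positivity) (by linarith [sq_nonneg ‖x‖]) (by positivity)
      _ ≤ A ^ (p / 2) + (‖z‖ ^ 2) ^ (p / 2) :=
          Real.rpow_add_le_add_rpow (by positivity) (by positivity) (by positivity) (by linarith)
      _ ≤ A ^ (p / 2) + (2 * r) ^ p := by
          rw [sq_rpow_div_two (norm_nonneg z)]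
          gcongr
      _ = A ^ (p / 2) + 2 ^ p * r ^ p := by rw [Real.mul_rpow (by norm_num) hr.le]
  have hgrad : A ^ ((p - 2) / 2) * ‖x‖ ≤ r ^ (p - 1) :=
    calc A ^ ((p - 2) / 2) * ‖x‖ ≤ A ^ ((p - 2) / 2) * A ^ ((1 : ℝ) / 2) := by
          gcongr
          rw [← Real.rpow_one ‖x‖, ← sq_rpow_div_two (norm_nonneg x)]
          exact Real.rpow_le_rpow (by positivity) (by linarith [sq_nonneg κ]) (by norm_num)
      _ = A ^ ((p - 1) / 2) := by
          rw [← Real.rpow_add' (by positivity) (by linarith)]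
          ring_nf
      _ ≤ (r ^ 2) ^ ((p - 1) / 2) := Real.rpow_le_rpow (by positivity) hA (by linarith)
      _ = r ^ (p - 1) := sq_rpow_div_two hr.le _
  have hinner := mul_le_mul_of_nonneg_left
    (neg_le_of_abs_le (abs_real_inner_le_norm x (z - x))) (by positivity : 0 ≤ A ^ ((p - 2) / 2))
  have hpow' := mul_le_mul_of_nonneg_left (sub_le_iff_le_add'.2 hpow) (by positivity : 0 ≤ 1 / p)
  calc 1 / p * ((κ ^ 2 + ‖z‖ ^ 2) ^ (p / 2) - A ^ (p / 2)) - A ^ ((p - 2) / 2) * ⟪x, z - x⟫_ℝ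
      ≤ 1 / p * (2 ^ p * r ^ p) + A ^ ((p - 2) / 2) * ‖x‖ * r := by nlinarith
    _ ≤ 1 / p * (2 ^ p * r ^ p) + r ^ (p - 1) * r := by gcongr
    _ = (2 ^ p / p + 1) * r ^ p := by
        rw [← Real.rpow_add_one hr.ne', sub_add_cancel]
        ring

theorem bregman_psiPK_le_of_le_two (hp : 1 < p) (hp2 : p ≤ 2) (x z : EuclideanSpace ℝ (Fin N)) :
    bregman (PsiPK N p κ) (gradPK N p κ) x z ≤ (2 ^ p / p + 1) * ‖z - x‖ ^ p := by
  rcases le_or_gt (κ ^ 2 + ‖x‖ ^ 2) (‖z - x‖ ^ 2) with hAr | hrA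
  · exact bregman_psiPK_le_of_le_sq hp hp2 hAr
  have hr : 0 ≤ ‖z - x‖ := norm_nonneg _
  have hmono : (κ ^ 2 + ‖x‖ ^ 2) ^ ((p - 2) / 2) * ‖z - x‖ ^ 2 ≤ ‖z - x‖ ^ p := by
    rcases hr.eq_or_lt with hr0 | hr0
    · rw [← hr0, zero_pow two_ne_zero, mul_zero]
      positivity
    calc (κ ^ 2 + ‖x‖ ^ 2) ^ ((p - 2) / 2) * ‖z - x‖ ^ 2
        ≤ (‖z - x‖ ^ 2) ^ ((p - 2) / 2) * ‖z - x‖ ^ 2 := by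
          refine mul_le_mul_of_nonneg_right ?_ (by positivity)
          exact Real.rpow_le_rpow_of_nonpos (by positivity) hrA.le (by linarith)
      _ = ‖z - x‖ ^ p := by
          rw [sq_rpow_div_two hr, ← Real.rpow_natCast, ← Real.rpow_add hr0]
          norm_num
  calc bregman (PsiPK N p κ) (gradPK N p κ) x z
      ≤ (κ ^ 2 + ‖x‖ ^ 2) ^ ((p - 2) / 2) * ‖z - x‖ ^ 2 / 2 :=
        bregman_psiPK_le_of_le_two_of_pos (by linarith) hp2 (hrA.trans_le' (by positivity)) z
    _ ≤ (2 ^ p / p + 1) * ‖z - x‖ ^ p := by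
        have : 0 ≤ 2 ^ p / p := by positivity
        nlinarith [(by positivity : 0 ≤ ‖z - x‖ ^ p)]

theorem bregman_psiPK_le_of_two_le (hp : 2 ≤ p) (x z : EuclideanSpace ℝ (Fin N)) :
    bregman (PsiPK N p κ) (gradPK N p κ) x z ≤
      (κ ^ 2 + ‖z‖ ^ 2) ^ ((p - 2) / 2) * ‖z - x‖ ^ 2 / 2
        + ((κ ^ 2 + ‖z‖ ^ 2) ^ ((p - 2) / 2) - (κ ^ 2 + ‖x‖ ^ 2) ^ ((p - 2) / 2))
          * ⟪x, z - x⟫_ℝ := by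
  have htan := rpow_tangent_le_rpow (by positivity : 0 ≤ κ ^ 2 + ‖z‖ ^ 2)
    (by positivity : 0 ≤ κ ^ 2 + ‖x‖ ^ 2) (by linarith : 1 ≤ p / 2)
  have hBA := norm_sq_sub_norm_sq_eq x z
  rw [show p / 2 - 1 = (p - 2) / 2 by ring, add_sub_add_left_eq_sub,
    show ‖x‖ ^ 2 - ‖z‖ ^ 2 = -(‖z - x‖ ^ 2 + 2 * ⟪x, z - x⟫_ℝ) by linarith] at htan
  have := mul_le_mul_of_nonneg_left htan (by positivity : 0 ≤ 1 / p)
  have hp0 : p ≠ 0 := by linarith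
  rw [bregman_psiPK]
  field_simp at this ⊢
  nlinarith

theorem exists_bregman_psiPK_le_of_two_lt (hp : 2 < p) {ρ : ℝ} (hρ : 0 ≤ ρ) :
    ∃ c, 0 ≤ c ∧ ∀ x z : EuclideanSpace ℝ (Fin N), ‖x‖ ≤ ρ → ‖z‖ ≤ ρ →
      bregman (PsiPK N p κ) (gradPK N p κ) x z ≤ c * ‖z - x‖ ^ (1 + min 1 ((p - 2) / 2)) := by
  set q := (p - 2) / 2 with hqdef
  set m := min 1 q
  have hq : 0 < q := by linarith
  have hm1 : m ≤ 1 := min_le_left _ _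
  set S := κ ^ 2 + ρ ^ 2
  obtain ⟨c, hc, hhol⟩ := exists_abs_rpow_sub_rpow_le hq S
  refine ⟨S ^ q * (2 * ρ) ^ (1 - m) / 2 + c * (2 * ρ) ^ m * ρ, by positivity,
    fun x z hx hz => (bregman_psiPK_le_of_two_le hp.le x z).trans ?_⟩
  rcases eq_or_ne z x with rfl | hzx
  · simp [Real.zero_rpow (by positivity : 1 + m ≠ 0)]
  have hr : 0 < ‖z - x‖ := norm_pos_iff.2 (sub_ne_zero.2 hzx)
  have hr2ρ : ‖z - x‖ ≤ 2 * ρ := by linarith [norm_sub_le z x]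
  have hA : κ ^ 2 + ‖x‖ ^ 2 ∈ Icc 0 S :=
    ⟨by positivity, add_le_add_right (pow_le_pow_left₀ (norm_nonneg x) hx 2) _⟩
  have hB : κ ^ 2 + ‖z‖ ^ 2 ∈ Icc 0 S :=
    ⟨by positivity, add_le_add_right (pow_le_pow_left₀ (norm_nonneg z) hz 2) _⟩
  have hquad : (κ ^ 2 + ‖z‖ ^ 2) ^ q * ‖z - x‖ ^ 2 / 2
      ≤ S ^ q * (2 * ρ) ^ (1 - m) / 2 * ‖z - x‖ ^ (1 + m) := by
    have := rpow_le_rpow_sub_mul_rpow hr hr2ρ (by linarith : 1 + m ≤ 2)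
    rw [show (2 : ℝ) - (1 + m) = 1 - m by ring, Real.rpow_two] at this
    have hBS := Real.rpow_le_rpow hB.1 hB.2 hq.le
    calc (κ ^ 2 + ‖z‖ ^ 2) ^ q * ‖z - x‖ ^ 2 / 2
        ≤ S ^ q * ((2 * ρ) ^ (1 - m) * ‖z - x‖ ^ (1 + m)) / 2 := by gcongr
      _ = _ := by ring
  have hcross : ((κ ^ 2 + ‖z‖ ^ 2) ^ q - (κ ^ 2 + ‖x‖ ^ 2) ^ q) * ⟪x, z - x⟫_ℝ
      ≤ c * (2 * ρ) ^ m * ρ * ‖z - x‖ ^ (1 + m) :=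
    calc _ ≤ |(κ ^ 2 + ‖z‖ ^ 2) ^ q - (κ ^ 2 + ‖x‖ ^ 2) ^ q| * |⟪x, z - x⟫_ℝ| := by
          rw [← abs_mul]
          exact le_abs_self _
      _ ≤ c * (2 * ρ * ‖z - x‖) ^ m * (ρ * ‖z - x‖) := by
          gcongr
          · refine (hhol _ hA _ hB).trans ?_
            rw [add_sub_add_left_eq_sub]
            gcongr
            exact (abs_norm_sq_sub_norm_sq_le z x).trans (by gcongr; linarith)
          · exact (abs_real_inner_le_norm x (z - x)).trans (by gcongr)
      _ = c * (2 * ρ) ^ m * ρ * ‖z - x‖ ^ (1 + m) := by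
          rw [Real.mul_rpow (by positivity) hr.le, add_comm, Real.rpow_add_one hr.ne']
          ring
  linarith

noncomputable def psiPKHolderExponent (p : ℝ) : ℝ := if p ≤ 2 then p - 1 else min 1 ((p - 2) / 2)

theorem psiPKHolderExponent_mem_Ioc (hp : 1 < p) : psiPKHolderExponent p ∈ Ioc 0 1 := by
  unfold psiPKHolderExponent
  split_ifs with hp2
  · exact ⟨by linarith, by linarith⟩
  · exact ⟨lt_min one_pos (by linarith), min_le_left _ _⟩

theorem exists_bregman_psiPK_le (hp : 1 < p) {ρ : ℝ} (hρ : 0 ≤ ρ) :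
    ∃ c, 0 ≤ c ∧ ∀ x z : EuclideanSpace ℝ (Fin N), ‖x‖ ≤ ρ → ‖z‖ ≤ ρ →
      bregman (PsiPK N p κ) (gradPK N p κ) x z ≤ c * ‖z - x‖ ^ (1 + psiPKHolderExponent p) := by
  unfold psiPKHolderExponent
  split_ifs with hp2
  · refine ⟨2 ^ p / p + 1, by positivity, fun x z _ _ => ?_⟩
    rw [add_sub_cancel]
    exact bregman_psiPK_le_of_le_two hp hp2 x z
  · exact exists_bregman_psiPK_le_of_two_lt (by linarith) hρ

end PsiPK

theorem stmt_11_general (N : ℕ) (p κ ν C : ℝ) (hp : 1 < p)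
    (hν : 0 < ν) (hνC : ν ≤ C)
    (Ψ : EuclideanSpace ℝ (Fin N) → ℝ)
    (Ψ' : EuclideanSpace ℝ (Fin N) → EuclideanSpace ℝ (Fin N))
    (hgrad : ∀ x, HasGradientAt Ψ (Ψ' x) x)
    (hsand : SandwichCond N p κ ν C Ψ) :
    ∃ α : ℝ, α ∈ Set.Ioc (0 : ℝ) 1 ∧
      ∀ R : ℝ, 0 < R → ∃ L : ℝ, 0 ≤ L ∧
        ∀ x y : EuclideanSpace ℝ (Fin N), ‖x‖ ≤ R → ‖y‖ ≤ R →
          ‖Ψ' x - Ψ' y‖ ≤ L * ‖x - y‖ ^ α := by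
  have hC : 0 ≤ C := hν.le.trans hνC
  have hconvex : ConvexOn ℝ univ Ψ := by
    refine (hsand.1.add ((convexOn_psiPK (κ := κ) hp.le).smul hν.le)).congr fun ξ _ => ?_
    simp only [Pi.add_apply, smul_eq_mul, sub_add_cancel]
  have hα := psiPKHolderExponent_mem_Ioc hp
  refine ⟨psiPKHolderExponent p, hα, fun R hR => ?_⟩
  obtain ⟨c, hc, hbound⟩ := exists_bregman_psiPK_le (N := N) (κ := κ) hp (by linarith : 0 ≤ R + 1)
  refine ⟨C * c * (2 + 2 * R), by positivity, fun x y hx hy => ?_⟩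
  refine norm_sub_le_of_bregman_le hα.1.le (mul_nonneg hC hc)
    (fun x z => hconvex.bregman_nonneg (mem_univ x) (mem_univ z) (hgrad x))
    (fun x z hx hz => ?_) hx hy
  calc bregman Ψ Ψ' x z ≤ C * bregman (PsiPK N p κ) (gradPK N p κ) x z :=
        bregman_le_mul_bregman_of_convexOn_sub hsand.2 hgrad (hasGradientAt_psiPK hp) x z
    _ ≤ C * c * ‖z - x‖ ^ (1 + psiPKHolderExponent p) := by
        rw [mul_assoc]
        exact mul_le_mul_of_nonneg_left (hbound x z hx hz) hC

/-- Under hypotheses `(Ψ₁)` and `(Ψ₂)`, the gradient map `∇Ψ` is locally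
Hölder continuous: there is `α ∈ (0,1]` such that on every ball of radius `R` the map
`∇Ψ` is `α`-Hölder with some constant `L`. -/
theorem stmt_11 (N : ℕ) (hN : 1 ≤ N) (p κ ν C : ℝ) (hp : 1 < p) (hκ : 0 ≤ κ)
    (hν : 0 < ν) (hνC : ν ≤ C)
    (Ψ : EuclideanSpace ℝ (Fin N) → ℝ)
    (Ψ' : EuclideanSpace ℝ (Fin N) → EuclideanSpace ℝ (Fin N))
    (hgrad : ∀ x, HasGradientAt Ψ (Ψ' x) x) (hΨ'cont : Continuous Ψ')
    (hΨ0 : Ψ 0 = 0) (hΨ'0 : Ψ' 0 = 0)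
    (hsand : SandwichCond N p κ ν C Ψ)
    (hC2a : κ = 0 ∧ p < 2 → ContDiffOn ℝ 2 Ψ {(0 : EuclideanSpace ℝ (Fin N))}ᶜ)
    (hC2b : ¬(κ = 0 ∧ p < 2) → ContDiff ℝ 2 Ψ) :
    ∃ α : ℝ, α ∈ Set.Ioc (0 : ℝ) 1 ∧
      ∀ R : ℝ, 0 < R → ∃ L : ℝ, 0 ≤ L ∧
        ∀ x y : EuclideanSpace ℝ (Fin N), ‖x‖ ≤ R → ‖y‖ ≤ R →
          ‖Ψ' x - Ψ' y‖ ≤ L * ‖x - y‖ ^ α :=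
  stmt_11_general N p κ ν C hp hν hνC Ψ Ψ' hgrad hsand
end

section
/- Let N ≥ 1, 1 < p < 2 and ν > 0, and let Ψ : ℝ^N → ℝ be continuous and such that Ψ − ν Ψ_{p,0} is convex on ℝ^N. Then for every ξ ∈ ℝ^N with ξ ≠ 0 one has \underline{Ψ}″(0)[ξ]² = +∞; that is, the quotient (Ψ(y + t w) + Ψ(y − t w) − 2Ψ(y))/t² tends to +∞ as y → 0, t → 0 with t ≠ 0, and w → ξ. -/
/-!
Write `Ψ = Φ + (ν / p) ‖·‖ ^ p` with `Φ` convex; midpoint convexity of `Φ` bounds the second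
difference of `Ψ` below by `ν / p` times that of `‖·‖ ^ p`. If `‖a‖ + ‖b‖ ≤ M`, the function
`s ↦ s ^ p - (c / 2) s ²` with `c = p (p - 1) M ^ (p - 2)` is convex and nondecreasing on `[0, M]`
(as `1 ≤ p ≤ 2`), which together with the parallelogram law gives
`‖a + b‖ ^ p + ‖a - b‖ ^ p - 2 ‖a‖ ^ p ≥ c ‖b‖ ²`. Taking `a = y`, `b = t w` and `M = ‖y‖ + ‖t w‖`,
the quotient is at least `ν (p - 1) ‖w‖ ² M ^ (p - 2)`, which tends to `+∞` because `M → 0⁺`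
and `p < 2`.
-/

open Filter Topology

open Real Set

section RpowSubSq

variable {p c M : ℝ}

noncomputable def rpowSubSq (p c s : ℝ) : ℝ := s ^ p - c / 2 * s ^ 2

lemma hasDerivAt_rpowSubSq {s : ℝ} (hs : s ≠ 0) :
    HasDerivAt (rpowSubSq p c) (p * s ^ (p - 1) - c * s) s := by
  have hsq : HasDerivAt (fun s : ℝ => c / 2 * s ^ 2) (c * s) s :=
    ((hasDerivAt_pow 2 s).const_mul (c / 2)).congr_deriv (by ring)
  exact (hasDerivAt_rpow_const (Or.inl hs)).sub hsq

lemma continuous_rpowSubSq (hp : 0 ≤ p) : Continuous (rpowSubSq p c) :=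
  (continuous_rpow_const hp).sub (by fun_prop)

lemma convexOn_rpowSubSq (hp : 1 ≤ p) (hp2 : p ≤ 2) :
    ConvexOn ℝ (Icc 0 M) (rpowSubSq p (p * (p - 1) * M ^ (p - 2))) := by
  refine convexOn_of_hasDerivWithinAt2_nonneg (convex_Icc 0 M)
    (continuous_rpowSubSq (by linarith)).continuousOn
    (f' := fun s => p * s ^ (p - 1) - p * (p - 1) * M ^ (p - 2) * s)
    (f'' := fun s => p * ((p - 1) * s ^ (p - 1 - 1)) - p * (p - 1) * M ^ (p - 2)) ?_ ?_ ?_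
    <;> intro s hs <;> rw [interior_Icc] at hs
  · exact (hasDerivAt_rpowSubSq hs.1.ne').hasDerivWithinAt
  · have hlin : HasDerivAt (fun s : ℝ => p * (p - 1) * M ^ (p - 2) * s)
        (p * (p - 1) * M ^ (p - 2)) s := by
      simpa using (hasDerivAt_id s).const_mul (p * (p - 1) * M ^ (p - 2))
    exact (((hasDerivAt_rpow_const (Or.inl hs.1.ne')).const_mul p).sub hlin).hasDerivWithinAt
  · have hM : M ^ (p - 2) ≤ s ^ (p - 2) := rpow_le_rpow_of_nonpos hs.1 hs.2.le (by linarith)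
    rw [show p - 1 - 1 = p - 2 by ring]
    nlinarith [mul_le_mul_of_nonneg_left hM (by nlinarith : (0 : ℝ) ≤ p * (p - 1))]

lemma monotoneOn_rpowSubSq (hp : 1 ≤ p) (hp2 : p ≤ 2) :
    MonotoneOn (rpowSubSq p (p * (p - 1) * M ^ (p - 2))) (Icc 0 M) := by
  refine monotoneOn_of_hasDerivWithinAt_nonneg (convex_Icc 0 M)
    (continuous_rpowSubSq (by linarith)).continuousOn
    (f' := fun s => p * s ^ (p - 1) - p * (p - 1) * M ^ (p - 2) * s) ?_ ?_
    <;> intro s hs <;> rw [interior_Icc] at hs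
  · exact (hasDerivAt_rpowSubSq hs.1.ne').hasDerivWithinAt
  have hM : M ^ (p - 2) ≤ s ^ (p - 2) := rpow_le_rpow_of_nonpos hs.1 hs.2.le (by linarith)
  have hM0 : 0 ≤ M ^ (p - 2) := rpow_nonneg (hs.1.trans hs.2).le _
  -- the derivative is `p s (s ^ (p - 2) - (p - 1) M ^ (p - 2))`
  have hsplit : s ^ (p - 1) = s ^ (p - 2) * s := by
    rw [show p - 1 = p - 2 + 1 by ring, rpow_add hs.1, rpow_one]
  rw [hsplit]
  have hps : 0 ≤ p * s := mul_nonneg (by linarith) hs.1.le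
  nlinarith [mul_le_mul_of_nonneg_left hM hps, mul_le_mul_of_nonneg_left hM0 hps]

end RpowSubSq

section SecondDiff

variable {E : Type*}

def secondDiff [AddCommGroup E] (f : E → ℝ) (y b : E) : ℝ := f (y + b) + f (y - b) - 2 * f y

lemma secondDiff_le_secondDiff_of_convexOn_sub [AddCommGroup E] [Module ℝ E] {f g : E → ℝ}
    (hfg : ConvexOn ℝ univ (fun x => f x - g x)) (y b : E) :
    secondDiff g y b ≤ secondDiff f y b := by
  have hmid := hfg.2 (mem_univ (y + b)) (mem_univ (y - b)) (by norm_num : (0 : ℝ) ≤ 1 / 2)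
    (by norm_num : (0 : ℝ) ≤ 1 / 2) (by norm_num)
  rw [show (1 / 2 : ℝ) • (y + b) + (1 / 2 : ℝ) • (y - b) = y by module] at hmid
  simp only [smul_eq_mul] at hmid
  unfold secondDiff
  linarith

variable [NormedAddCommGroup E] [InnerProductSpace ℝ E]

lemma mul_norm_sq_le_secondDiff_norm_rpow {p M : ℝ} (hp : 1 ≤ p) (hp2 : p ≤ 2) {a b : E}
    (hab : ‖a‖ + ‖b‖ ≤ M) :
    p * (p - 1) * M ^ (p - 2) * ‖b‖ ^ 2 ≤ secondDiff (fun z => ‖z‖ ^ p) a b := by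
  have hplus : ‖a + b‖ ∈ Icc 0 M := ⟨norm_nonneg _, (norm_add_le a b).trans hab⟩
  have hminus : ‖a - b‖ ∈ Icc 0 M := ⟨norm_nonneg _, (norm_sub_le a b).trans hab⟩
  have ha : ‖a‖ ∈ Icc 0 M := ⟨norm_nonneg _, by linarith [norm_nonneg b]⟩
  have hmid : ‖a‖ ≤ (‖a + b‖ + ‖a - b‖) / 2 := by
    have h := norm_add_le (a + b) (a - b)
    rw [show a + b + (a - b) = (2 : ℝ) • a by module, norm_smul, Real.norm_ofNat] at h
    linarith
  have hmono := monotoneOn_rpowSubSq (M := M) hp hp2 ha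
    ⟨by positivity, by linarith [hplus.2, hminus.2]⟩ hmid
  have hconv := (convexOn_rpowSubSq (M := M) hp hp2).2 hplus hminus
    (by norm_num : (0 : ℝ) ≤ 1 / 2) (by norm_num : (0 : ℝ) ≤ 1 / 2) (by norm_num)
  rw [smul_eq_mul, smul_eq_mul, smul_eq_mul, smul_eq_mul,
    show 1 / 2 * ‖a + b‖ + 1 / 2 * ‖a - b‖ = (‖a + b‖ + ‖a - b‖) / 2 by ring] at hconv
  have hpar : ‖a + b‖ ^ 2 + ‖a - b‖ ^ 2 = 2 * (‖a‖ ^ 2 + ‖b‖ ^ 2) := by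
    simpa only [sq] using parallelogram_law_with_norm ℝ a b
  unfold rpowSubSq at hmono hconv
  unfold secondDiff
  linear_combination 2 * hmono + 2 * hconv - p * (p - 1) * M ^ (p - 2) / 2 * hpar

lemma le_secondDiff_smul_div_sq_of_convexOn_sub {p ν : ℝ} (hp : 1 ≤ p) (hp2 : p ≤ 2)
    (hν : 0 ≤ ν) {Ψ : E → ℝ} (hconv : ConvexOn ℝ univ (fun x => Ψ x - ν * (‖x‖ ^ p / p)))
    (y w : E) {t : ℝ} (ht : t ≠ 0) :
    ν * (p - 1) * ‖w‖ ^ 2 * (‖y‖ + ‖t • w‖) ^ (p - 2) ≤ secondDiff Ψ y (t • w) / t ^ 2 := by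
  have hΨ := secondDiff_le_secondDiff_of_convexOn_sub hconv y (t • w)
  have hscale : secondDiff (fun z => ν * (‖z‖ ^ p / p)) y (t • w)
      = ν / p * secondDiff (fun z => ‖z‖ ^ p) y (t • w) := by
    unfold secondDiff; ring
  have hnorm := mul_norm_sq_le_secondDiff_norm_rpow hp hp2 (le_refl (‖y‖ + ‖t • w‖))
  rw [show ‖t • w‖ ^ 2 = t ^ 2 * ‖w‖ ^ 2 by rw [norm_smul, mul_pow, norm_eq_abs, sq_abs]]
    at hnorm
  have hp0 : 0 < p := by linarith
  rw [le_div_iff₀ (by positivity)]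
  calc ν * (p - 1) * ‖w‖ ^ 2 * (‖y‖ + ‖t • w‖) ^ (p - 2) * t ^ 2
      = ν / p * (p * (p - 1) * (‖y‖ + ‖t • w‖) ^ (p - 2) * (t ^ 2 * ‖w‖ ^ 2)) := by
        field_simp
    _ ≤ ν / p * secondDiff (fun z => ‖z‖ ^ p) y (t • w) := by gcongr
    _ ≤ secondDiff Ψ y (t • w) := hscale ▸ hΨ

end SecondDiff

lemma tendsto_norm_add_norm_smul_nhdsGT_zero {E : Type*} [NormedAddCommGroup E]
    [NormedSpace ℝ E] {ξ : E} (hξ : ξ ≠ 0) :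
    Tendsto (fun q : E × ℝ × E => ‖q.1‖ + ‖q.2.1 • q.2.2‖)
      (𝓝 0 ×ˢ 𝓝[≠] (0 : ℝ) ×ˢ 𝓝 ξ) (𝓝[>] 0) := by
  have ht : Tendsto (fun q : E × ℝ × E => q.2.1) (𝓝 0 ×ˢ 𝓝[≠] (0 : ℝ) ×ˢ 𝓝 ξ) (𝓝[≠] 0) :=
    tendsto_fst.comp tendsto_snd
  have hw : Tendsto (fun q : E × ℝ × E => q.2.2) (𝓝 0 ×ˢ 𝓝[≠] (0 : ℝ) ×ˢ 𝓝 ξ) (𝓝 ξ) :=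
    tendsto_snd.comp tendsto_snd
  refine tendsto_nhdsWithin_iff.2 ⟨?_, ?_⟩
  · have hlim := tendsto_fst.norm.add ((ht.mono_right nhdsWithin_le_nhds).smul hw).norm
    rwa [norm_zero, zero_smul, norm_zero, add_zero] at hlim
  · filter_upwards [ht self_mem_nhdsWithin, hw.eventually_ne hξ] with q htq hwq
    exact add_pos_of_nonneg_of_pos (norm_nonneg _) (norm_pos_iff.2 (smul_ne_zero htq hwq))

lemma PsiPK_zero_eq {N : ℕ} {p : ℝ} (hp : 0 < p) :
    PsiPK N p 0 = fun z => ‖z‖ ^ p / p := by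
  ext z
  rw [PsiPK, zero_rpow hp.ne', zero_pow two_ne_zero, zero_add, sub_zero, ← rpow_natCast,
    ← rpow_mul (norm_nonneg z), Nat.cast_ofNat, mul_div_cancel₀ _ two_ne_zero, one_div_mul_eq_div]

theorem stmt_12_general (N : ℕ) (p ν : ℝ) (hp : 1 < p) (hp2 : p < 2) (hν : 0 < ν)
    (Ψ : EuclideanSpace ℝ (Fin N) → ℝ)
    (hconv : ConvexOn ℝ Set.univ (fun ξ => Ψ ξ - ν * PsiPK N p 0 ξ))
    (ξ : EuclideanSpace ℝ (Fin N)) (hξ : ξ ≠ 0) :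
    Tendsto
      (fun q : EuclideanSpace ℝ (Fin N) × ℝ × EuclideanSpace ℝ (Fin N) =>
        (Ψ (q.1 + q.2.1 • q.2.2) + Ψ (q.1 - q.2.1 • q.2.2) - 2 * Ψ q.1) / q.2.1 ^ 2)
      (𝓝 0 ×ˢ 𝓝[≠] (0 : ℝ) ×ˢ 𝓝 ξ) atTop := by
  rw [PsiPK_zero_eq (by linarith)] at hconv
  have hw : Tendsto (fun q : EuclideanSpace ℝ (Fin N) × ℝ × EuclideanSpace ℝ (Fin N) => q.2.2)
      (𝓝 0 ×ˢ 𝓝[≠] (0 : ℝ) ×ˢ 𝓝 ξ) (𝓝 ξ) := tendsto_snd.comp tendsto_snd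
  have hlower := ((hw.norm.pow 2).const_mul (ν * (p - 1))).pos_mul_atTop
    (mul_pos (mul_pos hν (sub_pos.2 hp)) (pow_pos (norm_pos_iff.2 hξ) 2))
    ((tendsto_rpow_neg_nhdsGT_zero (sub_neg.2 hp2)).comp
      (tendsto_norm_add_norm_smul_nhdsGT_zero hξ))
  refine tendsto_atTop_mono' _ ?_ hlower
  filter_upwards [(tendsto_fst.comp tendsto_snd) self_mem_nhdsWithin] with q ht
  exact le_secondDiff_smul_div_sq_of_convexOn_sub hp.le hp2.le hν.le hconv q.1 q.2.2 ht

/-- Let `1 < p < 2`, `ν > 0` and let `Ψ` be continuous with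
`Ψ - ν Ψ_{p,0}` convex.  Then for every `ξ ≠ 0` the second difference quotient
`(Ψ(y + tw) + Ψ(y - tw) - 2Ψ(y))/t²` tends to `+∞` as `y → 0`, `t → 0` (`t ≠ 0`) and
`w → ξ`; i.e. `underline{Ψ}''(0)[ξ]² = +∞`. -/
theorem stmt_12 (N : ℕ) (hN : 1 ≤ N) (p ν : ℝ) (hp : 1 < p) (hp2 : p < 2) (hν : 0 < ν)
    (Ψ : EuclideanSpace ℝ (Fin N) → ℝ) (hΨcont : Continuous Ψ)
    (hconv : ConvexOn ℝ Set.univ (fun ξ => Ψ ξ - ν * PsiPK N p 0 ξ))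
    (ξ : EuclideanSpace ℝ (Fin N)) (hξ : ξ ≠ 0) :
    Tendsto
      (fun q : EuclideanSpace ℝ (Fin N) × ℝ × EuclideanSpace ℝ (Fin N) =>
        (Ψ (q.1 + q.2.1 • q.2.2) + Ψ (q.1 - q.2.1 • q.2.2) - 2 * Ψ q.1) / q.2.1 ^ 2)
      (𝓝 0 ×ˢ 𝓝[≠] (0 : ℝ) ×ˢ 𝓝 ξ) atTop :=
  stmt_12_general N p ν hp hp2 hν Ψ hconv ξ hξ
end

section
/- Let N ≥ 1, 1 < p < 2 and 0 < ν ≤ C, and let Ψ : ℝ^N → ℝ be of class C¹ on ℝ^N, of class C² on ℝ^N \ {0}, and satisfying the sandwich condition for Ψ_{p,0} with constants ν, C. Then for all η, ξ ∈ ℝ^N, the function t ↦ (1 − t) Ψ''(η + t(ξ − η))[ξ − η]², which is defined for almost every t ∈ (0,1) (namely whenever η + t(ξ − η) ≠ 0), is Lebesgue integrable on (0,1) and Ψ(ξ) − Ψ(η) − ∇Ψ(η)·(ξ − η) = ∫₀¹ (1 − t) Ψ''(η + t(ξ − η))[ξ − η]² dt. -/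
open Filter Topology

/-!
The sandwich condition makes `Ψ` convex, so along the segment `t ↦ η + t (ξ - η)` the first
derivative `g'` of `g(t) = Ψ(η + t (ξ - η))` is continuous and monotone, and differentiable
except at the (at most one) time the segment passes through the origin. Then
`F(t) = (1 - t) g'(t) + g(t)` is continuous with nonnegative derivative `(1 - t) g''(t)` off that
point, which makes the remainder integrable, and the fundamental theorem of calculus for `F`
is the Taylor formula.
-/

open Set MeasureTheory

theorem convexOn_univ_norm_rpow {E : Type*} [SeminormedAddCommGroup E] [NormedSpace ℝ E]
    {p : ℝ} (hp : 1 ≤ p) : ConvexOn ℝ univ (fun x : E => ‖x‖ ^ p) := by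
  refine ⟨convex_univ, fun x _ y _ a b ha hb hab => ?_⟩
  calc ‖a • x + b • y‖ ^ p ≤ (a * ‖x‖ + b * ‖y‖) ^ p := by
        refine Real.rpow_le_rpow (norm_nonneg _) ?_ (by linarith)
        simpa [norm_smul, abs_of_nonneg ha, abs_of_nonneg hb] using norm_add_le (a • x) (b • y)
    _ ≤ a * ‖x‖ ^ p + b * ‖y‖ ^ p :=
        (convexOn_rpow hp).2 (norm_nonneg x) (norm_nonneg y) ha hb hab

theorem psiPK_zero (N : ℕ) {p : ℝ} (hp : 0 < p) (ξ : EuclideanSpace ℝ (Fin N)) :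
    PsiPK N p 0 ξ = p⁻¹ * ‖ξ‖ ^ p := by
  have hpow : (‖ξ‖ ^ 2) ^ (p / 2) = ‖ξ‖ ^ p := by
    rw [← Real.rpow_natCast, ← Real.rpow_mul (norm_nonneg ξ)]
    ring_nf
  simp [PsiPK, hpow, Real.zero_rpow hp.ne']

theorem convexOn_psiPK_zero (N : ℕ) {p : ℝ} (hp : 1 ≤ p) : ConvexOn ℝ univ (PsiPK N p 0) := by
  have hp0 : 0 < p := by linarith
  rw [show PsiPK N p 0 = fun ξ => p⁻¹ • ‖ξ‖ ^ p from funext (psiPK_zero N hp0)]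
  exact (convexOn_univ_norm_rpow hp).smul (inv_nonneg.2 hp0.le)

theorem SandwichCond.convexOn {N : ℕ} {p ν C : ℝ} {Ψ : EuclideanSpace ℝ (Fin N) → ℝ}
    (h : SandwichCond N p 0 ν C Ψ) (hp : 1 ≤ p) (hν : 0 ≤ ν) : ConvexOn ℝ univ Ψ := by
  refine (h.1.add ((convexOn_psiPK_zero N hp).smul hν)).congr fun ξ _ => ?_
  simp

section Segment

variable {E F : Type*} [NormedAddCommGroup E] [NormedSpace ℝ E]
  [NormedAddCommGroup F] [NormedSpace ℝ F]

theorem DifferentiableAt.hasDerivAt_add_smul {f : E → F} {η v : E} {t : ℝ}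
    (hf : DifferentiableAt ℝ f (η + t • v)) :
    HasDerivAt (fun s : ℝ => f (η + s • v)) (fderiv ℝ f (η + t • v) v) t := by
  have hline : HasDerivAt (fun s : ℝ => η + s • v) v t := by
    simpa using ((hasDerivAt_id t).smul_const v).const_add η
  exact hf.hasFDerivAt.comp_hasDerivAt t hline

theorem subsingleton_setOf_add_smul_eq_zero {η v : E} (hv : v ≠ 0) :
    {t : ℝ | η + t • v = 0}.Subsingleton := fun _ hs _ ht =>
  smul_left_injective ℝ hv (add_left_cancel (hs.trans ht.symm))

theorem ConvexOn.monotone_fderiv_add_smul {Ψ : E → ℝ} (hΨ : ConvexOn ℝ univ Ψ)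
    (hd : Differentiable ℝ Ψ) (η v : E) :
    Monotone (fun t : ℝ => fderiv ℝ Ψ (η + t • v) v) := by
  have hline : ConvexOn ℝ univ (fun t : ℝ => Ψ (η + t • v)) := by
    simpa [Function.comp_def, AffineMap.lineMap_apply, add_comm] using
      hΨ.comp_affineMap (AffineMap.lineMap η (η + v))
  have hderiv : deriv (fun s : ℝ => Ψ (η + s • v)) = fun t => fderiv ℝ Ψ (η + t • v) v :=
    funext fun t => (hd _).hasDerivAt_add_smul.deriv
  rw [← monotoneOn_univ, ← hderiv]
  exact hline.monotoneOn_deriv fun t _ => (hd _).hasDerivAt_add_smul.differentiableAt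

end Segment

theorem intervalIntegrable_deriv_of_nonneg_off_subsingleton {g g' : ℝ → ℝ} {a b : ℝ}
    {s : Set ℝ} (hs : s.Subsingleton) (hab : a ≤ b) (hcont : ContinuousOn g (Icc a b))
    (hderiv : ∀ x ∈ Ioo a b \ s, HasDerivAt g (g' x) x)
    (hpos : ∀ x ∈ Ioo a b \ s, 0 ≤ g' x) : IntervalIntegrable g' volume a b := by
  have hpiece : ∀ c d, a ≤ c → c ≤ d → d ≤ b → Disjoint (Ioo c d) s →
      IntervalIntegrable g' volume c d := by
    intro c d hac hcd hdb hdisj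
    have hsub : Ioo c d ⊆ Ioo a b \ s := fun x hx =>
      ⟨Ioo_subset_Ioo hac hdb hx, hdisj.notMem_of_mem_left hx⟩
    refine intervalIntegral.intervalIntegrable_deriv_of_nonneg
      (hcont.mono (by simpa [uIcc_of_le hcd] using Icc_subset_Icc hac hdb)) ?_ ?_
    · simpa [hcd] using fun x hx => hderiv x (hsub hx)
    · simpa [hcd] using fun x hx => hpos x (hsub hx)
  by_cases hm : ∃ m ∈ s, m ∈ Ioo a b
  · obtain ⟨m, hms, hm⟩ := hm
    have hsm : s = {m} := hs.eq_singleton_of_mem hms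
    subst hsm
    exact (hpiece a m le_rfl hm.1.le hm.2.le (by simp)).trans
      (hpiece m b hm.1.le hm.2.le le_rfl (by simp))
  · push Not at hm
    exact hpiece a b le_rfl hab le_rfl
      (Set.disjoint_left.2 fun x hx hxs => (hm x hxs hx).elim)

theorem taylor_integral_remainder_of_monotone_deriv {g g' g'' : ℝ → ℝ} {s : Set ℝ}
    (hs : s.Subsingleton) (hg : ∀ t, HasDerivAt g (g' t) t) (hg'c : Continuous g')
    (hg'm : Monotone g') (hg'' : ∀ t ∈ Ioo 0 1 \ s, HasDerivAt g' (g'' t) t) :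
    IntervalIntegrable (fun t => (1 - t) * g'' t) volume 0 1 ∧
      g 1 - g 0 - g' 0 = ∫ t in (0 : ℝ)..1, (1 - t) * g'' t := by
  set G : ℝ → ℝ := fun t => (1 - t) * g' t + g t
  have hGc : ContinuousOn G (Icc 0 1) :=
    (((continuous_const.sub continuous_id).mul hg'c).add
      (continuous_iff_continuousAt.2 fun t => (hg t).continuousAt)).continuousOn
  have hG : ∀ t ∈ Ioo 0 1 \ s, HasDerivAt G ((1 - t) * g'' t) t := fun t ht => by
    have h1 : HasDerivAt (fun s : ℝ => 1 - s) (-1) t := by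
      simpa using (hasDerivAt_id t).const_sub 1
    exact ((h1.mul (hg'' t ht)).add (hg t)).congr_deriv (by ring)
  have hpos : ∀ t ∈ Ioo 0 1 \ s, 0 ≤ (1 - t) * g'' t := fun t ht =>
    mul_nonneg (by linarith [ht.1.2]) ((hg'' t ht).deriv ▸ hg'm.deriv_nonneg)
  have hint := intervalIntegrable_deriv_of_nonneg_off_subsingleton hs zero_le_one hGc hG hpos
  refine ⟨hint, ?_⟩
  rw [integral_eq_of_hasDerivAt_off_countable_of_le G _ zero_le_one hs.countable hGc hG hint]
  simp only [G]
  ring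

theorem stmt_15_general (N : ℕ) (p ν C : ℝ) (hp : 1 < p) (hν : 0 < ν)
    (Ψ : EuclideanSpace ℝ (Fin N) → ℝ) (hΨ1 : ContDiff ℝ 1 Ψ)
    (hΨ2 : ContDiffOn ℝ 2 Ψ {(0 : EuclideanSpace ℝ (Fin N))}ᶜ)
    (hsand : SandwichCond N p 0 ν C Ψ) :
    ∀ η ξ : EuclideanSpace ℝ (Fin N),
      IntervalIntegrable
        (fun t : ℝ =>
          (1 - t) * ((fderiv ℝ (fderiv ℝ Ψ) (η + t • (ξ - η)) (ξ - η)) (ξ - η)))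
        MeasureTheory.volume 0 1 ∧
      Ψ ξ - Ψ η - fderiv ℝ Ψ η (ξ - η) =
        ∫ t in (0 : ℝ)..1,
          (1 - t) * ((fderiv ℝ (fderiv ℝ Ψ) (η + t • (ξ - η)) (ξ - η)) (ξ - η)) := by
  intro η ξ
  obtain hv | hv := eq_or_ne (ξ - η) 0
  · simp [sub_eq_zero.mp hv]
  have hd : Differentiable ℝ Ψ := hΨ1.differentiable one_ne_zero
  have hg'' : ∀ t ∈ Ioo (0 : ℝ) 1 \ {t | η + t • (ξ - η) = 0},
      HasDerivAt (fun s : ℝ => fderiv ℝ Ψ (η + s • (ξ - η)) (ξ - η))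
        (fderiv ℝ (fderiv ℝ Ψ) (η + t • (ξ - η)) (ξ - η) (ξ - η)) t := by
    rintro t ⟨-, ht⟩
    have h2 : ContDiffAt ℝ 2 Ψ (η + t • (ξ - η)) :=
      hΨ2.contDiffAt (isOpen_compl_singleton.mem_nhds ht)
    have hfd := ((h2.fderiv_right le_rfl).differentiableAt one_ne_zero).hasDerivAt_add_smul
    simpa using hfd.clm_apply (hasDerivAt_const t (ξ - η))
  have key := taylor_integral_remainder_of_monotone_deriv
    (subsingleton_setOf_add_smul_eq_zero hv) (fun t => (hd _).hasDerivAt_add_smul)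
    ((hΨ1.continuous_fderiv one_ne_zero).comp (by fun_prop) |>.clm_apply continuous_const)
    ((hsand.convexOn hp.le hν.le).monotone_fderiv_add_smul hd η (ξ - η)) hg''
  simpa using key

/-- Let `1 < p < 2` and let `Ψ` be `C¹` on `ℝᴺ`, `C²` away from the
origin, satisfying the sandwich condition for `Ψ_{p,0}`.  Then for all `η, ξ` the
function `t ↦ (1-t) Ψ''(η + t(ξ-η))[ξ-η]²` is integrable on `(0,1)` and the
second-order Taylor formula with integral remainder holds:
`Ψ(ξ) - Ψ(η) - ∇Ψ(η)·(ξ-η) = ∫₀¹ (1-t) Ψ''(η + t(ξ-η))[ξ-η]² dt`. -/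
theorem stmt_15 (N : ℕ) (hN : 1 ≤ N) (p ν C : ℝ) (hp : 1 < p) (hp2 : p < 2)
    (hν : 0 < ν) (hνC : ν ≤ C)
    (Ψ : EuclideanSpace ℝ (Fin N) → ℝ) (hΨ1 : ContDiff ℝ 1 Ψ)
    (hΨ2 : ContDiffOn ℝ 2 Ψ {(0 : EuclideanSpace ℝ (Fin N))}ᶜ)
    (hsand : SandwichCond N p 0 ν C Ψ) :
    ∀ η ξ : EuclideanSpace ℝ (Fin N),
      IntervalIntegrable
        (fun t : ℝ =>
          (1 - t) * ((fderiv ℝ (fderiv ℝ Ψ) (η + t • (ξ - η)) (ξ - η)) (ξ - η)))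
        MeasureTheory.volume 0 1 ∧
      Ψ ξ - Ψ η - fderiv ℝ Ψ η (ξ - η) =
        ∫ t in (0 : ℝ)..1,
          (1 - t) * ((fderiv ℝ (fderiv ℝ Ψ) (η + t • (ξ - η)) (ξ - η)) (ξ - η)) :=
  stmt_15_general N p ν C hp hν Ψ hΨ1 hΨ2 hsand
end
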